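/- For every integer n ≥ 4, there are exactly 9n − 11 + ⌊(n−3)/4⌋ smooth arithmetical structures on the graph CP_{2,n}; moreover, there are 17 smooth arithmetical structures on CP_{2,3}, eight on CP_{2,2}, and three on CP_{2,1}. -/
import Mathlib


/-- An arithmetical structure on the graph `CP_{m,n}` (two paths `a₁,…,a_m` and
`b₁,…,b_n` joined by a doubled edge between `a₁` and `b₁`), encoded by 1-indexed
label functions `a b : ℕ → ℕ` which are set to `0` outside the index ranges
`[1,m]` and `[1,n]`.  All labels are positive, their overall gcd is `1`,
`a₁ ∣ a₂ + 2b₁` (where `a₂ = 0` if `m = 1`), `aᵢ ∣ a_{i-1} + a_{i+1}` for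
`1 < i < m`, `a_m ∣ a_{m-1}` if `m ≥ 2`, and symmetrically for the `bᵢ`. -/
def IsArithCP (m n : ℕ) (a b : ℕ → ℕ) : Prop :=
  (∀ i, 1 ≤ i → i ≤ m → 0 < a i) ∧
  (∀ i, 1 ≤ i → i ≤ n → 0 < b i) ∧
  (∀ i, ¬(1 ≤ i ∧ i ≤ m) → a i = 0) ∧
  (∀ i, ¬(1 ≤ i ∧ i ≤ n) → b i = 0) ∧
  Nat.gcd ((Finset.Icc 1 m).gcd a) ((Finset.Icc 1 n).gcd b) = 1 ∧
  (a 1 ∣ a 2 + 2 * b 1) ∧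
  (∀ i, 1 < i → i < m → a i ∣ a (i - 1) + a (i + 1)) ∧
  (2 ≤ m → a m ∣ a (m - 1)) ∧
  (b 1 ∣ b 2 + 2 * a 1) ∧
  (∀ i, 1 < i → i < n → b i ∣ b (i - 1) + b (i + 1)) ∧
  (2 ≤ n → b n ∣ b (n - 1))

/-- A smooth arithmetical structure on `CP_{m,n}`: an arithmetical structure with
`a₁ > a₂ > … > a_m` and `b₁ > b₂ > … > b_n`. -/
def IsSmoothCP (m n : ℕ) (a b : ℕ → ℕ) : Prop :=
  IsArithCP m n a b ∧
  (∀ i, 1 ≤ i → i < m → a (i + 1) < a i) ∧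
  (∀ i, 1 ≤ i → i < n → b (i + 1) < b i)

/-- The number of arithmetical structures on `CP_{m,n}`. -/
noncomputable def arithCountCP (m n : ℕ) : ℕ :=
  Set.ncard {p : (ℕ → ℕ) × (ℕ → ℕ) | IsArithCP m n p.1 p.2}

/-- The number of smooth arithmetical structures on `CP_{m,n}`. -/
noncomputable def smoothCountCP (m n : ℕ) : ℕ :=
  Set.ncard {p : (ℕ → ℕ) × (ℕ → ℕ) | IsSmoothCP m n p.1 p.2}

namespace CPAux


/-- Clean form of a smooth structure on `CP_{2,n}`. -/
structure Sm (n a1 a2 : ℕ) (b : ℕ → ℕ) : Prop where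
  ha2 : 0 < a2
  hlt : a2 < a1
  hdvd : a2 ∣ a1
  hA : a1 ∣ a2 + 2 * b 1
  bpos : ∀ i, 1 ≤ i → i ≤ n → 0 < b i
  bzero : ∀ i, ¬(1 ≤ i ∧ i ≤ n) → b i = 0
  bdec : ∀ i, 1 ≤ i → i < n → b (i + 1) < b i
  hB : b 1 ∣ b 2 + 2 * a1
  hmid : ∀ i, 1 < i → i < n → b i ∣ b (i - 1) + b (i + 1)
  hend : 2 ≤ n → b n ∣ b (n - 1)
  hgcd : ∀ d, d ∣ a1 → d ∣ a2 → (∀ i, 1 ≤ i → i ≤ n → d ∣ b i) → d = 1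

def encA (a1 a2 : ℕ) : ℕ → ℕ := fun i => if i = 1 then a1 else if i = 2 then a2 else 0

def T (n : ℕ) : Set (ℕ × ℕ × (ℕ → ℕ)) := {x | Sm n x.1 x.2.1 x.2.2}

lemma mem_one : (1 : ℕ) ∈ Finset.Icc 1 2 := by decide
lemma mem_two : (2 : ℕ) ∈ Finset.Icc 1 2 := by decide

lemma mem_iff (n : ℕ) (p : (ℕ → ℕ) × (ℕ → ℕ)) :
    IsSmoothCP 2 n p.1 p.2 ↔ Sm n (p.1 1) (p.1 2) p.2 ∧ p.1 = encA (p.1 1) (p.1 2) := by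
  obtain ⟨a, b⟩ := p
  simp only
  constructor
  · rintro ⟨⟨apos, bpos, azero, bzero, hg, hA, -, hendA, hB, hmid, hend⟩, adec, bdec⟩
    have ha2 : 0 < a 2 := apos 2 (by norm_num) (by norm_num)
    have hlt : a 2 < a 1 := adec 1 le_rfl (by norm_num)
    refine ⟨⟨ha2, hlt, hendA (by norm_num), hA, bpos, bzero, bdec, hB, hmid, hend, ?_⟩, ?_⟩
    · intro d h1 h2 h3
      have hdA : d ∣ (Finset.Icc 1 2).gcd a := by
        refine Finset.dvd_gcd fun i hi => ?_
        rw [Finset.mem_Icc] at hi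
        obtain ⟨hi1, hi2⟩ := hi
        interval_cases i
        · exact h1
        · exact h2
      have hdB : d ∣ (Finset.Icc 1 n).gcd b := by
        refine Finset.dvd_gcd fun i hi => ?_
        rw [Finset.mem_Icc] at hi
        exact h3 i hi.1 hi.2
      have := Nat.dvd_gcd hdA hdB
      rw [hg] at this
      exact Nat.dvd_one.mp this
    · funext i
      by_cases h1 : i = 1
      · simp [encA, h1]
      · by_cases h2 : i = 2
        · simp [encA, h1, h2]
        · simp only [encA, h1, h2, if_false]
          exact azero i (by omega)
  · rintro ⟨hs, he⟩
    have ha1 : 0 < a 1 := lt_trans hs.ha2 hs.hlt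
    refine ⟨⟨?_, hs.bpos, ?_, hs.bzero, ?_, hs.hA, ?_, fun _ => hs.hdvd, hs.hB, hs.hmid, hs.hend⟩, ?_, hs.bdec⟩
    · intro i h1 h2
      interval_cases i
      · exact ha1
      · exact hs.ha2
    · intro i hi
      rw [he]
      simp only [encA]
      rw [if_neg (by omega), if_neg (by omega)]
    · have d1 : Nat.gcd ((Finset.Icc 1 2).gcd a) ((Finset.Icc 1 n).gcd b) ∣ a 1 :=
        (Nat.gcd_dvd_left _ _).trans (Finset.gcd_dvd mem_one)
      have d2 : Nat.gcd ((Finset.Icc 1 2).gcd a) ((Finset.Icc 1 n).gcd b) ∣ a 2 :=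
        (Nat.gcd_dvd_left _ _).trans (Finset.gcd_dvd mem_two)
      refine hs.hgcd _ d1 d2 fun i hi1 hi2 => ?_
      exact (Nat.gcd_dvd_right _ _).trans (Finset.gcd_dvd (Finset.mem_Icc.mpr ⟨hi1, hi2⟩))
    · intro i h1 h2
      omega
    · intro i h1 h2
      have : i = 1 := by omega
      subst this
      exact hs.hlt

lemma count_eq (n : ℕ) : smoothCountCP 2 n = (T n).ncard := by
  have hinj : Function.Injective (fun x : ℕ × ℕ × (ℕ → ℕ) => (encA x.1 x.2.1, x.2.2)) := by
    rintro ⟨x1, x2, xb⟩ ⟨y1, y2, yb⟩ h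
    simp only [Prod.mk.injEq] at h
    obtain ⟨h1, h2⟩ := h
    have e1 := congrFun h1 1
    have e2 := congrFun h1 2
    simp [encA] at e1 e2
    simp_all
  have hset : {p : (ℕ → ℕ) × (ℕ → ℕ) | IsSmoothCP 2 n p.1 p.2}
      = (fun x : ℕ × ℕ × (ℕ → ℕ) => (encA x.1 x.2.1, x.2.2)) '' (T n) := by
    ext p
    simp only [Set.mem_setOf_eq, Set.mem_image]
    constructor
    · intro h
      obtain ⟨hs, he⟩ := (mem_iff n p).mp h
      refine ⟨(p.1 1, p.1 2, p.2), hs, ?_⟩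
      simp only
      rw [← he]
    · rintro ⟨x, hx, rfl⟩
      apply (mem_iff n _).mpr
      have e1 : encA x.1 x.2.1 1 = x.1 := by simp [encA]
      have e2 : encA x.1 x.2.1 2 = x.2.1 := by simp [encA]
      simp only [e1, e2]
      exact ⟨hx, by trivial⟩
  rw [smoothCountCP, hset, Set.ncard_image_of_injective _ hinj]




lemma dvd_eq_self {B y : ℕ} (h : B ∣ y) (h1 : 0 < y) (h2 : y < 2 * B) : y = B := by
  obtain ⟨c, hc⟩ := h
  match c with
  | 0 => omega
  | 1 => omega
  | (c + 2) =>
    have : B * 2 ≤ B * (c + 2) := Nat.mul_le_mul_left B (by omega)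
    omega

/-- If `d` divides the first two labels on the path, it divides all of them. -/
lemma dvd_all {n : ℕ} {b : ℕ → ℕ}
    (hmid : ∀ i, 1 < i → i < n → b i ∣ b (i - 1) + b (i + 1))
    {d : ℕ} (h1 : d ∣ b 1) (h2 : d ∣ b 2) :
    ∀ i, 1 ≤ i → i ≤ n → d ∣ b i := by
  intro i
  induction i using Nat.strong_induction_on with
  | _ i ih =>
    intro hi1 hin
    match i, hi1 with
    | 1, _ => exact h1
    | 2, _ => exact h2
    | (i + 3), _ =>
      obtain ⟨c, hc⟩ := hmid (i + 2) (by omega) (by omega)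
      have e : i + 2 - 1 = i + 1 := by omega
      rw [e] at hc
      have hd1 : d ∣ b (i + 1) := ih (i + 1) (by omega) (by omega) (by omega)
      have hd2 : d ∣ b (i + 2) := ih (i + 2) (by omega) (by omega) (by omega)
      have hsum : d ∣ b (i + 1) + b (i + 3) := hc ▸ hd2.mul_right c
      exact (Nat.dvd_add_right hd1).mp hsum

section Steps

variable {n : ℕ} {b : ℕ → ℕ}
  (bpos : ∀ i, 1 ≤ i → i ≤ n → 0 < b i)
  (bdec : ∀ i, 1 ≤ i → i < n → b (i + 1) < b i)
  (hmid : ∀ i, 1 < i → i < n → b i ∣ b (i - 1) + b (i + 1))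
  (hend : 2 ≤ n → b n ∣ b (n - 1))

include bpos bdec hmid

lemma step1 {i : ℕ} (h1 : 1 < i) (h2 : i < n) (hprev : b (i - 1) = b i + 1) :
    b (i + 1) + 1 = b i := by
  have hd := hmid i h1 h2
  rw [hprev, show b i + 1 + b (i + 1) = b i + (1 + b (i + 1)) by ring] at hd
  have hd2 : b i ∣ 1 + b (i + 1) := (Nat.dvd_add_right (dvd_refl (b i))).mp hd
  have hp1 := bpos (i + 1) (by omega) (by omega)
  have hlt := bdec i (by omega) h2
  have := dvd_eq_self hd2 (by omega) (by omega)
  omega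

lemma step2 {i : ℕ} (h1 : 1 < i) (h2 : i < n) (hprev : b (i - 1) = b i + 2) :
    b (i + 1) + 2 = b i := by
  have hd := hmid i h1 h2
  rw [hprev, show b i + 2 + b (i + 1) = b i + (2 + b (i + 1)) by ring] at hd
  have hd2 : b i ∣ 2 + b (i + 1) := (Nat.dvd_add_right (dvd_refl (b i))).mp hd
  have hp1 := bpos (i + 1) (by omega) (by omega)
  have hlt := bdec i (by omega) h2
  have := dvd_eq_self hd2 (by omega) (by omega)
  omega

lemma step4 {i : ℕ} (h1 : 1 < i) (h2 : i < n) (hprev : b (i - 1) = b i + 4) :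
    b (i + 1) + 4 = b i ∨ (b i = 3 ∧ b (i + 1) = 2) := by
  have hd := hmid i h1 h2
  rw [hprev, show b i + 4 + b (i + 1) = b i + (4 + b (i + 1)) by ring] at hd
  have hd2 : b i ∣ 4 + b (i + 1) := (Nat.dvd_add_right (dvd_refl (b i))).mp hd
  have hp1 := bpos (i + 1) (by omega) (by omega)
  have hlt := bdec i (by omega) h2
  by_cases h5 : 5 ≤ b i
  · left
    have := dvd_eq_self hd2 (by omega) (by omega)
    omega
  · obtain ⟨c, hc⟩ := hd2
    have hb2 : 2 ≤ b i := by omega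
    have hb4 : b i ≤ 4 := by omega
    set m := b i with hm
    interval_cases m <;> omega

end Steps

section APs

variable {n j : ℕ} {b : ℕ → ℕ}
  (bpos : ∀ i, 1 ≤ i → i ≤ n → 0 < b i)
  (bdec : ∀ i, 1 ≤ i → i < n → b (i + 1) < b i)
  (hmid : ∀ i, 1 < i → i < n → b i ∣ b (i - 1) + b (i + 1))
  (hend : 2 ≤ n → b n ∣ b (n - 1))
  (hj1 : 1 ≤ j) (hjn : j < n)

include bpos bdec hmid hend hj1 hjn

lemma ap2 (hst : b (j + 1) + 2 = b j) :
    (∀ i, j ≤ i → i ≤ n → b i + 2 * (i - j) = b j) ∧ b n ∣ 2 := by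
  have key : ∀ i, j ≤ i → i < n → b (i + 1) + 2 = b i := by
    intro i
    induction i using Nat.strong_induction_on with
    | _ i ih =>
      intro hji hin
      rcases eq_or_lt_of_le hji with rfl | hlt
      · exact hst
      · have hp : b (i - 1 + 1) + 2 = b (i - 1) := ih (i - 1) (by omega) (by omega) (by omega)
        have e : i - 1 + 1 = i := by omega
        rw [e] at hp
        exact step2 bpos bdec hmid (by omega) hin (by omega)
  constructor
  · intro i hji hin
    induction i, hji using Nat.le_induction with
    | base => omega
    | succ i hji ih =>
      have hk := key i hji (by omega)
      have := ih (by omega)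
      have e : i + 1 - j = (i - j) + 1 := by omega
      rw [e]
      omega
  · have hk := key (n - 1) (by omega) (by omega)
    have e : n - 1 + 1 = n := by omega
    rw [e] at hk
    have he := hend (by omega)
    rw [← hk] at he
    rw [show b n + 2 = b n + 2 by rfl] at he
    exact (Nat.dvd_add_right (dvd_refl (b n))).mp he

lemma ap1 (hst : b (j + 1) + 1 = b j) :
    (∀ i, j ≤ i → i ≤ n → b i + (i - j) = b j) ∧ b n = 1 := by
  have key : ∀ i, j ≤ i → i < n → b (i + 1) + 1 = b i := by
    intro i
    induction i using Nat.strong_induction_on with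
    | _ i ih =>
      intro hji hin
      rcases eq_or_lt_of_le hji with rfl | hlt
      · exact hst
      · have hp : b (i - 1 + 1) + 1 = b (i - 1) := ih (i - 1) (by omega) (by omega) (by omega)
        have e : i - 1 + 1 = i := by omega
        rw [e] at hp
        exact step1 bpos bdec hmid (by omega) hin (by omega)
  constructor
  · intro i hji hin
    induction i, hji using Nat.le_induction with
    | base => omega
    | succ i hji ih =>
      have hk := key i hji (by omega)
      have := ih (by omega)
      have e : i + 1 - j = (i - j) + 1 := by omega
      rw [e]
      omega
  · have hk := key (n - 1) (by omega) (by omega)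
    have e : n - 1 + 1 = n := by omega
    rw [e] at hk
    have he := hend (by omega)
    rw [← hk] at he
    have := (Nat.dvd_add_right (dvd_refl (b n))).mp he
    exact Nat.dvd_one.mp this

lemma ap4 (hst : b (j + 1) + 4 = b j) (hodd : b j % 2 = 1) :
    ((∀ i, j ≤ i → i ≤ n → b i + 4 * (i - j) = b j) ∧ b n = 1)
    ∨ (j + 2 ≤ n ∧ (∀ i, j ≤ i → i ≤ n - 2 → b i + 4 * (i - j) = b j) ∧
        b (n - 2) = 3 ∧ b (n - 1) = 2 ∧ b n = 1) := by
  by_cases hall : ∀ l, j ≤ l → l < n → b (l + 1) + 4 = b l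
  · left
    have formula : ∀ i, j ≤ i → i ≤ n → b i + 4 * (i - j) = b j := by
      intro i hji hin
      induction i, hji using Nat.le_induction with
      | base => omega
      | succ i hji ih =>
        have hk := hall i hji (by omega)
        have := ih (by omega)
        have e : i + 1 - j = (i - j) + 1 := by omega
        rw [e]
        omega
    refine ⟨formula, ?_⟩
    have hk := hall (n - 1) (by omega) (by omega)
    have e : n - 1 + 1 = n := by omega
    rw [e] at hk
    have he := hend (by omega)
    rw [← hk] at he
    have hdvd4 : b n ∣ 4 := (Nat.dvd_add_right (dvd_refl (b n))).mp he
    have hf := formula n (by omega) le_rfl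
    have hpn := bpos n (by omega) le_rfl
    obtain ⟨c, hc⟩ := hdvd4
    have hle : b n ≤ 4 := Nat.le_of_dvd (by norm_num) ⟨c, hc⟩
    set m := b n with hm
    interval_cases m <;> omega
  · right
    push_neg at hall
    have hex : ∃ l, j ≤ l ∧ l < n ∧ b (l + 1) + 4 ≠ b l := hall
    classical
    obtain ⟨i0, hP, hmin⟩ : ∃ i0, (j ≤ i0 ∧ i0 < n ∧ b (i0 + 1) + 4 ≠ b i0) ∧
        ∀ m, m < i0 → ¬(j ≤ m ∧ m < n ∧ b (m + 1) + 4 ≠ b m) :=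
      ⟨Nat.find hex, Nat.find_spec hex, fun m hm => Nat.find_min hex hm⟩
    have hji0 : j < i0 := by
      rcases Nat.lt_or_ge j i0 with h | h
      · exact h
      · have : i0 = j := by omega
        rw [this] at hP
        exact absurd hst hP.2.2
    have claim : ∀ l, j ≤ l → l ≤ i0 → b l + 4 * (l - j) = b j := by
      intro l hjl hli
      induction l, hjl using Nat.le_induction with
      | base => omega
      | succ l hjl ih =>
        have hstep : b (l + 1) + 4 = b l := by
          have := hmin l (by omega)
          push_neg at this
          exact this hjl (by omega)
        have := ih (by omega)
        have e : l + 1 - j = (l - j) + 1 := by omega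
        rw [e]
        omega
    have hprev : b (i0 - 1) = b i0 + 4 := by
      have h1 := claim (i0 - 1) (by omega) (by omega)
      have h2 := claim i0 (by omega) le_rfl
      have e : i0 - j = (i0 - 1 - j) + 1 := by omega
      omega
    have hs4 := step4 bpos bdec hmid (by omega) hP.2.1 hprev
    rcases hs4 with h | ⟨h3, h2⟩
    · exact absurd h hP.2.2
    · -- b i0 = 3, b (i0+1) = 2
      have hne : i0 + 1 ≠ n := by
        intro he'
        have he2 := hend (by omega)
        have e1 : n - 1 = i0 := by omega
        rw [e1, ← he'] at he2
        rw [h2, h3] at he2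
        omega
      have hlt : i0 + 1 < n := by omega
      have hb1 : b (i0 + 2) = 1 := by
        have hd := bdec (i0 + 1) (by omega) hlt
        rw [show i0 + 1 + 1 = i0 + 2 from rfl] at hd
        have hp := bpos (i0 + 2) (by omega) (by omega)
        omega
      have hn2 : i0 + 2 = n := by
        by_contra hne2
        have hlt2 : i0 + 2 < n := by omega
        have hd3 := bdec (i0 + 2) (by omega) hlt2
        rw [show i0 + 2 + 1 = i0 + 3 from rfl] at hd3
        have := bpos (i0 + 3) (by omega) (by omega)
        omega
      refine ⟨by omega, ?_, ?_, ?_, ?_⟩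
      · intro l hjl hln
        exact claim l hjl (by omega)
      · rw [show n - 2 = i0 by omega]; exact h3
      · rw [show n - 1 = i0 + 1 by omega]; exact h2
      · rw [← hn2]; exact hb1

end APs




/-! Family label functions. -/

def bf1 (n : ℕ) : ℕ → ℕ := fun i => if 1 ≤ i ∧ i ≤ n then 2 * (n - i) + 1 else 0
def bf5 (n : ℕ) : ℕ → ℕ := fun i => if 1 ≤ i ∧ i ≤ n then 2 * (n - i) + 2 else 0
def bf2 (n : ℕ) : ℕ → ℕ := fun i =>
  if i = 1 then 6 * n - 11 else if i = 2 then 4 * n - 8 else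
  if 3 ≤ i ∧ i ≤ n then 2 * (n - i) + 1 else 0
def bf3 (n : ℕ) : ℕ → ℕ := fun i =>
  if i = 1 then 6 * n - 8 else if i = 2 then 4 * n - 6 else
  if 3 ≤ i ∧ i ≤ n then 2 * (n - i) + 2 else 0
def bfA (n : ℕ) : ℕ → ℕ := fun i =>
  if 1 ≤ i ∧ i ≤ n - 2 then 4 * (n - i) - 5 else if i = n - 1 then 2 else if i = n then 1 else 0
def bf6 (n : ℕ) : ℕ → ℕ := fun i =>
  if i = 1 then 12 * n - 43 else if i = 2 then 8 * n - 30 else bfA n i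
def bfB (n : ℕ) : ℕ → ℕ := fun i =>
  if 1 ≤ i ∧ i ≤ n then 4 * (n - i) + 1 else 0
def bf8 (n : ℕ) : ℕ → ℕ := fun i =>
  if i = 1 then 12 * n - 25 else if i = 2 then 8 * n - 18 else bfB n i
def bf10 (n : ℕ) : ℕ → ℕ := fun i => if 1 ≤ i ∧ i ≤ n then n + 1 - i else 0
def gf (x y z : ℕ) : ℕ → ℕ := fun i => if i = 1 then x else if i = 2 then y else if i = 3 then z else 0

/-! Evaluation lemmas. -/

lemma bf1_in {n i : ℕ} (h1 : 1 ≤ i) (h2 : i ≤ n) : bf1 n i = 2 * (n - i) + 1 := if_pos ⟨h1, h2⟩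
lemma bf1_out {n i : ℕ} (h : ¬(1 ≤ i ∧ i ≤ n)) : bf1 n i = 0 := if_neg h
lemma bf5_in {n i : ℕ} (h1 : 1 ≤ i) (h2 : i ≤ n) : bf5 n i = 2 * (n - i) + 2 := if_pos ⟨h1, h2⟩
lemma bf5_out {n i : ℕ} (h : ¬(1 ≤ i ∧ i ≤ n)) : bf5 n i = 0 := if_neg h
lemma bf2_1 {n : ℕ} : bf2 n 1 = 6 * n - 11 := rfl
lemma bf2_2 {n : ℕ} : bf2 n 2 = 4 * n - 8 := rfl
lemma bf2_in {n i : ℕ} (h1 : 3 ≤ i) (h2 : i ≤ n) : bf2 n i = 2 * (n - i) + 1 := by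
  simp only [bf2]; rw [if_neg (by omega), if_neg (by omega), if_pos ⟨h1, h2⟩]
lemma bf2_out {n i : ℕ} (hn : 3 ≤ n) (h : ¬(1 ≤ i ∧ i ≤ n)) : bf2 n i = 0 := by
  simp only [bf2]; rw [if_neg (by omega), if_neg (by omega), if_neg (by omega)]
lemma bf3_1 {n : ℕ} : bf3 n 1 = 6 * n - 8 := rfl
lemma bf3_2 {n : ℕ} : bf3 n 2 = 4 * n - 6 := rfl
lemma bf3_in {n i : ℕ} (h1 : 3 ≤ i) (h2 : i ≤ n) : bf3 n i = 2 * (n - i) + 2 := by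
  simp only [bf3]; rw [if_neg (by omega), if_neg (by omega), if_pos ⟨h1, h2⟩]
lemma bf3_out {n i : ℕ} (hn : 3 ≤ n) (h : ¬(1 ≤ i ∧ i ≤ n)) : bf3 n i = 0 := by
  simp only [bf3]; rw [if_neg (by omega), if_neg (by omega), if_neg (by omega)]
lemma bfA_in {n i : ℕ} (h1 : 1 ≤ i) (h2 : i ≤ n - 2) : bfA n i = 4 * (n - i) - 5 := if_pos ⟨h1, h2⟩
lemma bfA_n1 {n : ℕ} (hn : 3 ≤ n) : bfA n (n - 1) = 2 := by
  simp only [bfA]; rw [if_neg (by omega)]; simp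
lemma bfA_n {n : ℕ} (hn : 3 ≤ n) : bfA n n = 1 := by
  simp only [bfA]; rw [if_neg (by omega), if_neg (by omega)]; simp
lemma bfA_out {n i : ℕ} (hn : 3 ≤ n) (h : ¬(1 ≤ i ∧ i ≤ n)) : bfA n i = 0 := by
  simp only [bfA]; rw [if_neg (by omega), if_neg (by omega), if_neg (by omega)]
lemma bf6_1 {n : ℕ} : bf6 n 1 = 12 * n - 43 := rfl
lemma bf6_2 {n : ℕ} : bf6 n 2 = 8 * n - 30 := rfl
lemma bf6_in {n i : ℕ} (h1 : 3 ≤ i) (h2 : i ≤ n - 2) : bf6 n i = 4 * (n - i) - 5 := by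
  simp only [bf6]; rw [if_neg (by omega), if_neg (by omega), bfA_in (by omega) h2]
lemma bf6_n1 {n : ℕ} (hn : 5 ≤ n) : bf6 n (n - 1) = 2 := by
  simp only [bf6]; rw [if_neg (by omega), if_neg (by omega), bfA_n1 (by omega)]
lemma bf6_n {n : ℕ} (hn : 5 ≤ n) : bf6 n n = 1 := by
  simp only [bf6]; rw [if_neg (by omega), if_neg (by omega), bfA_n (by omega)]
lemma bf6_out {n i : ℕ} (hn : 5 ≤ n) (h : ¬(1 ≤ i ∧ i ≤ n)) : bf6 n i = 0 := by
  simp only [bf6]; rw [if_neg (by omega), if_neg (by omega), bfA_out (by omega) h]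
lemma bfB_in {n i : ℕ} (h1 : 1 ≤ i) (h2 : i ≤ n) : bfB n i = 4 * (n - i) + 1 := if_pos ⟨h1, h2⟩
lemma bfB_out {n i : ℕ} (h : ¬(1 ≤ i ∧ i ≤ n)) : bfB n i = 0 := if_neg h
lemma bf8_1 {n : ℕ} : bf8 n 1 = 12 * n - 25 := rfl
lemma bf8_2 {n : ℕ} : bf8 n 2 = 8 * n - 18 := rfl
lemma bf8_in {n i : ℕ} (h1 : 3 ≤ i) (h2 : i ≤ n) : bf8 n i = 4 * (n - i) + 1 := by
  simp only [bf8]; rw [if_neg (by omega), if_neg (by omega), bfB_in (by omega) h2]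
lemma bf8_out {n i : ℕ} (hn : 3 ≤ n) (h : ¬(1 ≤ i ∧ i ≤ n)) : bf8 n i = 0 := by
  simp only [bf8]; rw [if_neg (by omega), if_neg (by omega), bfB_out h]
lemma bf10_in {n i : ℕ} (h1 : 1 ≤ i) (h2 : i ≤ n) : bf10 n i = n + 1 - i := if_pos ⟨h1, h2⟩
lemma bf10_out {n i : ℕ} (h : ¬(1 ≤ i ∧ i ≤ n)) : bf10 n i = 0 := if_neg h



/-! Soundness of the families. -/

lemma sm_F1 {n : ℕ} (hn : 2 ≤ n) : Sm n (2 * n) 2 (bf1 n) := by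
  refine ⟨by omega, by omega, ⟨n, rfl⟩, ?_, ?_, ?_, ?_, ?_, ?_, ?_, ?_⟩
  · rw [bf1_in (by omega) (by omega)]; exact ⟨2, by omega⟩
  · intro i h1 h2; rw [bf1_in h1 h2]; omega
  · intro i h; exact bf1_out h
  · intro i h1 h2
    rw [bf1_in (by omega) (by omega), bf1_in (by omega) (by omega)]; omega
  · rw [bf1_in (by omega) (by omega), bf1_in (by omega) (by omega)]; exact ⟨3, by omega⟩
  · intro i h1 h2
    rw [bf1_in (by omega) (by omega), bf1_in (by omega) (by omega),
      bf1_in (by omega) (by omega)]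
    exact ⟨2, by omega⟩
  · intro h
    rw [bf1_in (by omega) (by omega)]
    rw [show 2 * (n - n) + 1 = 1 by omega]
    exact one_dvd _
  · intro d _ _ h3
    have hd := h3 n (by omega) le_rfl
    rw [bf1_in (by omega) (by omega), show 2 * (n - n) + 1 = 1 by omega] at hd
    exact Nat.dvd_one.mp hd

lemma sm_F4 {n : ℕ} (hn : 2 ≤ n) : Sm n (4 * n - 1) 1 (bf1 n) := by
  refine ⟨by omega, by omega, one_dvd _, ?_, ?_, ?_, ?_, ?_, ?_, ?_, ?_⟩
  · rw [bf1_in (by omega) (by omega)]; exact ⟨1, by omega⟩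
  · intro i h1 h2; rw [bf1_in h1 h2]; omega
  · intro i h; exact bf1_out h
  · intro i h1 h2
    rw [bf1_in (by omega) (by omega), bf1_in (by omega) (by omega)]; omega
  · rw [bf1_in (by omega) (by omega), bf1_in (by omega) (by omega)]; exact ⟨5, by omega⟩
  · intro i h1 h2
    rw [bf1_in (by omega) (by omega), bf1_in (by omega) (by omega),
      bf1_in (by omega) (by omega)]
    exact ⟨2, by omega⟩
  · intro h
    rw [bf1_in (by omega) (by omega), show 2 * (n - n) + 1 = 1 by omega]
    exact one_dvd _
  · intro d _ h2 _; exact Nat.dvd_one.mp h2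

lemma sm_F5 {n : ℕ} (hn : 2 ≤ n) : Sm n (4 * n + 1) 1 (bf5 n) := by
  refine ⟨by omega, by omega, one_dvd _, ?_, ?_, ?_, ?_, ?_, ?_, ?_, ?_⟩
  · rw [bf5_in (by omega) (by omega)]; exact ⟨1, by omega⟩
  · intro i h1 h2; rw [bf5_in h1 h2]; omega
  · intro i h; exact bf5_out h
  · intro i h1 h2
    rw [bf5_in (by omega) (by omega), bf5_in (by omega) (by omega)]; omega
  · rw [bf5_in (by omega) (by omega), bf5_in (by omega) (by omega)]; exact ⟨5, by omega⟩
  · intro i h1 h2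
    rw [bf5_in (by omega) (by omega), bf5_in (by omega) (by omega),
      bf5_in (by omega) (by omega)]
    exact ⟨2, by omega⟩
  · intro h
    rw [bf5_in (by omega) (by omega), bf5_in (by omega) (by omega)]
    exact ⟨2, by omega⟩
  · intro d _ h2 _; exact Nat.dvd_one.mp h2

lemma sm_F2 {n : ℕ} (hn : 3 ≤ n) : Sm n (4 * n - 7) 1 (bf2 n) := by
  refine ⟨by omega, by omega, one_dvd _, ?_, ?_, ?_, ?_, ?_, ?_, ?_, ?_⟩
  · rw [bf2_1]; exact ⟨3, by omega⟩
  · intro i h1 h2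
    rcases show i = 1 ∨ i = 2 ∨ 3 ≤ i by omega with h | h | h
    · subst h; rw [bf2_1]; omega
    · subst h; rw [bf2_2]; omega
    · rw [bf2_in h h2]; omega
  · intro i h; exact bf2_out hn h
  · intro i h1 h2
    rcases show i = 1 ∨ i = 2 ∨ 3 ≤ i by omega with h | h | h
    · subst h; rw [bf2_1, show (1:ℕ)+1 = 2 from rfl, bf2_2]; omega
    · subst h; rw [bf2_2, show (2:ℕ)+1 = 3 from rfl, bf2_in (by omega) (by omega)]; omega
    · rw [bf2_in h h2.le, bf2_in (by omega) (by omega)]; omega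
  · rw [bf2_1, bf2_2]; exact ⟨2, by omega⟩
  · intro i h1 h2
    rcases show i = 2 ∨ i = 3 ∨ 4 ≤ i by omega with h | h | h
    · subst h
      rw [show (2:ℕ)-1 = 1 from rfl, show (2:ℕ)+1 = 3 from rfl, bf2_1, bf2_2,
        bf2_in (by omega) (by omega)]
      exact ⟨2, by omega⟩
    · subst h
      rw [show (3:ℕ)-1 = 2 from rfl, show (3:ℕ)+1 = 4 from rfl, bf2_2,
        bf2_in (by omega) (by omega), bf2_in (by omega) (by omega)]
      exact ⟨3, by omega⟩
    · rw [bf2_in (by omega) (by omega), bf2_in (by omega) (by omega),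
        bf2_in (by omega) (by omega)]
      exact ⟨2, by omega⟩
  · intro h
    rcases show n = 3 ∨ 4 ≤ n by omega with h3 | h4
    · subst h3
      rw [bf2_in (by omega) (by omega), show (3:ℕ)-1 = 2 from rfl, bf2_2]
      rw [show 2 * (3 - 3) + 1 = 1 by omega]
      exact one_dvd _
    · rw [bf2_in (by omega) (by omega), show 2 * (n - n) + 1 = 1 by omega]
      exact one_dvd _
  · intro d _ h2 _; exact Nat.dvd_one.mp h2

lemma sm_F3 {n : ℕ} (hn : 3 ≤ n) : Sm n (4 * n - 5) 1 (bf3 n) := by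
  refine ⟨by omega, by omega, one_dvd _, ?_, ?_, ?_, ?_, ?_, ?_, ?_, ?_⟩
  · rw [bf3_1]; exact ⟨3, by omega⟩
  · intro i h1 h2
    rcases show i = 1 ∨ i = 2 ∨ 3 ≤ i by omega with h | h | h
    · subst h; rw [bf3_1]; omega
    · subst h; rw [bf3_2]; omega
    · rw [bf3_in h h2]; omega
  · intro i h; exact bf3_out hn h
  · intro i h1 h2
    rcases show i = 1 ∨ i = 2 ∨ 3 ≤ i by omega with h | h | h
    · subst h; rw [bf3_1, show (1:ℕ)+1 = 2 from rfl, bf3_2]; omega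
    · subst h; rw [bf3_2, show (2:ℕ)+1 = 3 from rfl, bf3_in (by omega) (by omega)]; omega
    · rw [bf3_in h h2.le, bf3_in (by omega) (by omega)]; omega
  · rw [bf3_1, bf3_2]; exact ⟨2, by omega⟩
  · intro i h1 h2
    rcases show i = 2 ∨ i = 3 ∨ 4 ≤ i by omega with h | h | h
    · subst h
      rw [show (2:ℕ)-1 = 1 from rfl, show (2:ℕ)+1 = 3 from rfl, bf3_1, bf3_2,
        bf3_in (by omega) (by omega)]
      exact ⟨2, by omega⟩
    · subst h
      rw [show (3:ℕ)-1 = 2 from rfl, show (3:ℕ)+1 = 4 from rfl, bf3_2,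
        bf3_in (by omega) (by omega), bf3_in (by omega) (by omega)]
      exact ⟨3, by omega⟩
    · rw [bf3_in (by omega) (by omega), bf3_in (by omega) (by omega),
        bf3_in (by omega) (by omega)]
      exact ⟨2, by omega⟩
  · intro h
    rcases show n = 3 ∨ 4 ≤ n by omega with h3 | h4
    · subst h3
      rw [bf3_in (by omega) (by omega), show (3:ℕ)-1 = 2 from rfl, bf3_2]
      exact ⟨3, by omega⟩
    · rw [bf3_in (by omega) (by omega), bf3_in (by omega) (by omega)]
      exact ⟨2, by omega⟩
  · intro d _ h2 _; exact Nat.dvd_one.mp h2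

lemma sm_F9 {n : ℕ} (hn : 2 ≤ n) : Sm n (8 * n - 4) 2 (bfB n) := by
  refine ⟨by omega, by omega, ⟨4 * n - 2, by omega⟩, ?_, ?_, ?_, ?_, ?_, ?_, ?_, ?_⟩
  · rw [bfB_in (by omega) (by omega)]; exact ⟨1, by omega⟩
  · intro i h1 h2; rw [bfB_in h1 h2]; omega
  · intro i h; exact bfB_out h
  · intro i h1 h2
    rw [bfB_in (by omega) (by omega), bfB_in (by omega) (by omega)]; omega
  · rw [bfB_in (by omega) (by omega), bfB_in (by omega) (by omega)]; exact ⟨5, by omega⟩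
  · intro i h1 h2
    rw [bfB_in (by omega) (by omega), bfB_in (by omega) (by omega),
      bfB_in (by omega) (by omega)]
    exact ⟨2, by omega⟩
  · intro h
    rw [bfB_in (by omega) (by omega), show 4 * (n - n) + 1 = 1 by omega]
    exact one_dvd _
  · intro d _ _ h3
    have hd := h3 n (by omega) le_rfl
    rw [bfB_in (by omega) (by omega), show 4 * (n - n) + 1 = 1 by omega] at hd
    exact Nat.dvd_one.mp hd

lemma sm_F8 {n : ℕ} (hn : 3 ≤ n) : Sm n (8 * n - 16) 2 (bf8 n) := by
  refine ⟨by omega, by omega, ⟨4 * n - 8, by omega⟩, ?_, ?_, ?_, ?_, ?_, ?_, ?_, ?_⟩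
  · rw [bf8_1]; exact ⟨3, by omega⟩
  · intro i h1 h2
    rcases show i = 1 ∨ i = 2 ∨ 3 ≤ i by omega with h | h | h
    · subst h; rw [bf8_1]; omega
    · subst h; rw [bf8_2]; omega
    · rw [bf8_in h h2]; omega
  · intro i h; exact bf8_out hn h
  · intro i h1 h2
    rcases show i = 1 ∨ i = 2 ∨ 3 ≤ i by omega with h | h | h
    · subst h; rw [bf8_1, show (1:ℕ)+1 = 2 from rfl, bf8_2]; omega
    · subst h; rw [bf8_2, show (2:ℕ)+1 = 3 from rfl, bf8_in (by omega) (by omega)]; omega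
    · rw [bf8_in h h2.le, bf8_in (by omega) (by omega)]; omega
  · rw [bf8_1, bf8_2]; exact ⟨2, by omega⟩
  · intro i h1 h2
    rcases show i = 2 ∨ i = 3 ∨ 4 ≤ i by omega with h | h | h
    · subst h
      rw [show (2:ℕ)-1 = 1 from rfl, show (2:ℕ)+1 = 3 from rfl, bf8_1, bf8_2,
        bf8_in (by omega) (by omega)]
      exact ⟨2, by omega⟩
    · subst h
      rw [show (3:ℕ)-1 = 2 from rfl, show (3:ℕ)+1 = 4 from rfl, bf8_2,
        bf8_in (by omega) (by omega), bf8_in (by omega) (by omega)]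
      exact ⟨3, by omega⟩
    · rw [bf8_in (by omega) (by omega), bf8_in (by omega) (by omega),
        bf8_in (by omega) (by omega)]
      exact ⟨2, by omega⟩
  · intro h
    rcases show n = 3 ∨ 4 ≤ n by omega with h3 | h4
    · subst h3
      rw [bf8_in (by omega) (by omega), show (3:ℕ)-1 = 2 from rfl, bf8_2]
      rw [show 4 * (3 - 3) + 1 = 1 by omega]
      exact one_dvd _
    · rw [bf8_in (by omega) (by omega), show 4 * (n - n) + 1 = 1 by omega]
      exact one_dvd _
  · intro d _ _ h3
    have hd := h3 n (by omega) le_rfl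
    rw [bf8_in (by omega) (by omega), show 4 * (n - n) + 1 = 1 by omega] at hd
    exact Nat.dvd_one.mp hd

lemma sm_F7 {n : ℕ} (hn : 4 ≤ n) : Sm n (8 * n - 16) 2 (bfA n) := by
  refine ⟨by omega, by omega, ⟨4 * n - 8, by omega⟩, ?_, ?_, ?_, ?_, ?_, ?_, ?_, ?_⟩
  · rw [bfA_in (by omega) (by omega)]; exact ⟨1, by omega⟩
  · intro i h1 h2
    rcases show (1 ≤ i ∧ i ≤ n - 2) ∨ i = n - 1 ∨ i = n by omega with h | h | h
    · rw [bfA_in h.1 h.2]; omega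
    · subst h; rw [bfA_n1 (by omega)]; omega
    · subst h; rw [bfA_n (by omega)]; omega
  · intro i h; exact bfA_out (by omega) h
  · intro i h1 h2
    rcases show (1 ≤ i ∧ i + 1 ≤ n - 2) ∨ i = n - 2 ∨ i = n - 1 by omega with h | h | h
    · rw [bfA_in (by omega) (by omega), bfA_in (by omega) (by omega)]; omega
    · subst h
      rw [show n - 2 + 1 = n - 1 by omega, bfA_n1 (by omega), bfA_in (by omega) (by omega)]
      omega
    · subst h
      rw [show n - 1 + 1 = n by omega, bfA_n (by omega), bfA_n1 (by omega)]
      omega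
  · rw [bfA_in (by omega) (by omega), bfA_in (by omega) (by omega)]; exact ⟨5, by omega⟩
  · intro i h1 h2
    rcases show (2 ≤ i ∧ i ≤ n - 3) ∨ (i = n - 2 ∧ 2 ≤ i) ∨ i = n - 1 by omega
      with h | ⟨h, h'⟩ | h
    · rw [bfA_in (by omega) (by omega), bfA_in (by omega) (by omega),
        bfA_in (by omega) (by omega)]
      exact ⟨2, by omega⟩
    · subst h
      rw [show n - 2 - 1 = n - 3 by omega, show n - 2 + 1 = n - 1 by omega,
        bfA_in (by omega) (by omega), bfA_n1 (by omega), bfA_in (by omega) (by omega)]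
      exact ⟨3, by omega⟩
    · subst h
      rw [show n - 1 - 1 = n - 2 by omega, show n - 1 + 1 = n by omega,
        bfA_n1 (by omega), bfA_n (by omega), bfA_in (by omega) (by omega)]
      exact ⟨2, by omega⟩
  · intro h
    rw [bfA_n (by omega)]
    exact one_dvd _
  · intro d _ _ h3
    have hd := h3 n (by omega) le_rfl
    rw [bfA_n (by omega)] at hd
    exact Nat.dvd_one.mp hd

lemma sm_F6 {n : ℕ} (hn : 5 ≤ n) : Sm n (8 * n - 28) 2 (bf6 n) := by
  refine ⟨by omega, by omega, ⟨4 * n - 14, by omega⟩, ?_, ?_, ?_, ?_, ?_, ?_, ?_, ?_⟩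
  · rw [bf6_1]; exact ⟨3, by omega⟩
  · intro i h1 h2
    rcases show i = 1 ∨ i = 2 ∨ (3 ≤ i ∧ i ≤ n - 2) ∨ i = n - 1 ∨ i = n by omega
      with h | h | h | h | h
    · subst h; rw [bf6_1]; omega
    · subst h; rw [bf6_2]; omega
    · rw [bf6_in h.1 h.2]; omega
    · subst h; rw [bf6_n1 (by omega)]; omega
    · subst h; rw [bf6_n (by omega)]; omega
  · intro i h; exact bf6_out (by omega) h
  · intro i h1 h2
    rcases show i = 1 ∨ i = 2 ∨ (3 ≤ i ∧ i + 1 ≤ n - 2) ∨ i = n - 2 ∨ i = n - 1 by omega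
      with h | h | h | h | h
    · subst h; rw [bf6_1, show (1:ℕ)+1 = 2 from rfl, bf6_2]; omega
    · subst h; rw [bf6_2, show (2:ℕ)+1 = 3 from rfl, bf6_in (by omega) (by omega)]; omega
    · rw [bf6_in (by omega) (by omega), bf6_in (by omega) (by omega)]; omega
    · subst h
      rw [show n - 2 + 1 = n - 1 by omega, bf6_n1 (by omega), bf6_in (by omega) (by omega)]
      omega
    · subst h
      rw [show n - 1 + 1 = n by omega, bf6_n (by omega), bf6_n1 (by omega)]
      omega
  · rw [bf6_1, bf6_2]; exact ⟨2, by omega⟩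
  · intro i h1 h2
    rcases show i = 2 ∨ (i = 3 ∧ n = 5) ∨ (i = 3 ∧ 6 ≤ n) ∨ (4 ≤ i ∧ i ≤ n - 3) ∨
        (i = n - 2 ∧ 4 ≤ i) ∨ i = n - 1 by omega
      with h | ⟨h, h5⟩ | ⟨h, h6⟩ | h | ⟨h, h'⟩ | h
    · subst h
      rw [show (2:ℕ)-1 = 1 from rfl, show (2:ℕ)+1 = 3 from rfl, bf6_1, bf6_2,
        bf6_in (by omega) (by omega)]
      exact ⟨2, by omega⟩
    · subst h; subst h5
      rw [show (3:ℕ)-1 = 2 from rfl, show (3:ℕ)+1 = 4 from rfl, bf6_2,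
        bf6_in (by omega) (by omega), show (4:ℕ) = 5 - 1 from rfl, bf6_n1 (by omega)]
      exact ⟨4, by omega⟩
    · subst h
      rw [show (3:ℕ)-1 = 2 from rfl, show (3:ℕ)+1 = 4 from rfl, bf6_2,
        bf6_in (by omega) (by omega), bf6_in (by omega) (by omega)]
      exact ⟨3, by omega⟩
    · rw [bf6_in (by omega) (by omega), bf6_in (by omega) (by omega),
        bf6_in (by omega) (by omega)]
      exact ⟨2, by omega⟩
    · subst h
      rw [show n - 2 - 1 = n - 3 by omega, show n - 2 + 1 = n - 1 by omega,
        bf6_in (by omega) (by omega), bf6_n1 (by omega), bf6_in (by omega) (by omega)]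
      exact ⟨3, by omega⟩
    · subst h
      rw [show n - 1 - 1 = n - 2 by omega, show n - 1 + 1 = n by omega,
        bf6_n1 (by omega), bf6_n (by omega), bf6_in (by omega) (by omega)]
      exact ⟨2, by omega⟩
  · intro h
    rw [bf6_n (by omega)]
    exact one_dvd _
  · intro d _ _ h3
    have hd := h3 n (by omega) le_rfl
    rw [bf6_n (by omega)] at hd
    exact Nat.dvd_one.mp hd

lemma sm_F10 {n : ℕ} (hn : 7 ≤ n) (h4 : n % 4 = 3) : Sm n ((n + 1) / 2) 2 (bf10 n) := by
  refine ⟨by omega, by omega, ⟨(n + 1) / 4, by omega⟩, ?_, ?_, ?_, ?_, ?_, ?_, ?_, ?_⟩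
  · rw [bf10_in (by omega) (by omega)]; exact ⟨4, by omega⟩
  · intro i h1 h2; rw [bf10_in h1 h2]; omega
  · intro i h; exact bf10_out h
  · intro i h1 h2
    rw [bf10_in (by omega) (by omega), bf10_in (by omega) (by omega)]; omega
  · rw [bf10_in (by omega) (by omega), bf10_in (by omega) (by omega)]; exact ⟨2, by omega⟩
  · intro i h1 h2
    rw [bf10_in (by omega) (by omega), bf10_in (by omega) (by omega),
      bf10_in (by omega) (by omega)]
    exact ⟨2, by omega⟩
  · intro h
    rw [bf10_in (by omega) (by omega), show n + 1 - n = 1 by omega]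
    exact one_dvd _
  · intro d _ _ h3
    have hd := h3 n (by omega) le_rfl
    rw [bf10_in (by omega) (by omega), show n + 1 - n = 1 by omega] at hd
    exact Nat.dvd_one.mp hd

/-! Sporadic structures. -/

lemma gf_ev (x y z : ℕ) : gf x y z 1 = x ∧ gf x y z 2 = y ∧ gf x y z 3 = z ∧
    ∀ i, i = 0 ∨ 4 ≤ i → gf x y z i = 0 := by
  refine ⟨rfl, rfl, rfl, ?_⟩
  intro i hi
  simp only [gf]
  rw [if_neg (by omega), if_neg (by omega), if_neg (by omega)]

lemma sm_G2 : Sm 2 3 1 (gf 4 2 0) := by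
  obtain ⟨e1, e2, e3, e0⟩ := gf_ev 4 2 0
  refine ⟨by omega, by omega, one_dvd _, ?_, ?_, ?_, ?_, ?_, ?_, ?_, ?_⟩
  · rw [e1]; exact ⟨3, by omega⟩
  · intro i h1 h2; interval_cases i
    · rw [e1]; omega
    · rw [e2]; omega
  · intro i h
    rcases show i = 0 ∨ i = 3 ∨ 4 ≤ i by omega with h' | h' | h'
    · exact e0 i (Or.inl h')
    · subst h'; exact e3
    · exact e0 i (Or.inr h')
  · intro i h1 h2
    have : i = 1 := by omega
    subst this
    rw [show (1:ℕ)+1 = 2 from rfl, e1, e2]; omega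
  · rw [e1, e2]; exact ⟨2, by omega⟩
  · intro i h1 h2; omega
  · intro h; rw [show (2:ℕ)-1 = 1 from rfl, e1, e2]; exact ⟨2, by omega⟩
  · intro d _ h2 _; exact Nat.dvd_one.mp h2

lemma sm_G3a : Sm 3 4 2 (gf 5 2 1) := by
  obtain ⟨e1, e2, e3, e0⟩ := gf_ev 5 2 1
  refine ⟨by omega, by omega, ⟨2, rfl⟩, ?_, ?_, ?_, ?_, ?_, ?_, ?_, ?_⟩
  · rw [e1]; exact ⟨3, by omega⟩
  · intro i h1 h2; interval_cases i
    · rw [e1]; omega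
    · rw [e2]; omega
    · rw [e3]; omega
  · intro i h
    rcases show i = 0 ∨ 4 ≤ i by omega with h' | h'
    · exact e0 i (Or.inl h')
    · exact e0 i (Or.inr h')
  · intro i h1 h2; interval_cases i
    · rw [show (1:ℕ)+1 = 2 from rfl, e1, e2]; omega
    · rw [show (2:ℕ)+1 = 3 from rfl, e2, e3]; omega
  · rw [e1, e2]; exact ⟨2, by omega⟩
  · intro i h1 h2
    have : i = 2 := by omega
    subst this
    rw [show (2:ℕ)-1 = 1 from rfl, show (2:ℕ)+1 = 3 from rfl, e1, e2, e3]
    exact ⟨3, by omega⟩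
  · intro h; rw [show (3:ℕ)-1 = 2 from rfl, e3, e2]; exact one_dvd _
  · intro d _ _ h3
    have hd := h3 3 (by omega) le_rfl
    rw [e3] at hd
    exact Nat.dvd_one.mp hd

lemma sm_G3b : Sm 3 8 2 (gf 3 2 1) := by
  obtain ⟨e1, e2, e3, e0⟩ := gf_ev 3 2 1
  refine ⟨by omega, by omega, ⟨4, rfl⟩, ?_, ?_, ?_, ?_, ?_, ?_, ?_, ?_⟩
  · rw [e1]
  · intro i h1 h2; interval_cases i
    · rw [e1]; omega
    · rw [e2]; omega
    · rw [e3]; omega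
  · intro i h
    rcases show i = 0 ∨ 4 ≤ i by omega with h' | h'
    · exact e0 i (Or.inl h')
    · exact e0 i (Or.inr h')
  · intro i h1 h2; interval_cases i
    · rw [show (1:ℕ)+1 = 2 from rfl, e1, e2]; omega
    · rw [show (2:ℕ)+1 = 3 from rfl, e2, e3]; omega
  · rw [e1, e2]; exact ⟨6, by omega⟩
  · intro i h1 h2
    have : i = 2 := by omega
    subst this
    rw [show (2:ℕ)-1 = 1 from rfl, show (2:ℕ)+1 = 3 from rfl, e1, e2, e3]
    exact ⟨2, by omega⟩
  · intro h; rw [show (3:ℕ)-1 = 2 from rfl, e3, e2]; exact one_dvd _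
  · intro d _ _ h3
    have hd := h3 3 (by omega) le_rfl
    rw [e3] at hd
    exact Nat.dvd_one.mp hd




def New (n : ℕ) : Set (ℕ × ℕ × (ℕ → ℕ)) :=
  {x | Sm n x.1 x.2.1 x.2.2 ∧ x.2.2 2 + 2 * x.1 ≠ x.2.2 1}

def sh (a1 : ℕ) (b : ℕ → ℕ) : ℕ → ℕ := fun i => if i = 1 then b 1 + 2 * a1 else b (i - 1)

def Phi : ℕ × ℕ × (ℕ → ℕ) → ℕ × ℕ × (ℕ → ℕ) := fun x => (x.1, x.2.1, sh x.1 x.2.2)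

def dr (b : ℕ → ℕ) : ℕ → ℕ := fun i => if i = 0 then 0 else b (i + 1)

lemma sh_1 {a1 : ℕ} {b : ℕ → ℕ} : sh a1 b 1 = b 1 + 2 * a1 := if_pos rfl
lemma sh_ne {a1 : ℕ} {b : ℕ → ℕ} {i : ℕ} (h : i ≠ 1) : sh a1 b i = b (i - 1) := if_neg h
lemma dr_pos {b : ℕ → ℕ} {i : ℕ} (h : 1 ≤ i) : dr b i = b (i + 1) := if_neg (by omega)

lemma sm_sh {n a1 a2 : ℕ} {b : ℕ → ℕ} (h : Sm n a1 a2 b) (hn : 1 ≤ n) :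
    Sm (n + 1) a1 a2 (sh a1 b) := by
  have ha1 : 0 < a1 := lt_trans h.ha2 h.hlt
  refine ⟨h.ha2, h.hlt, h.hdvd, ?_, ?_, ?_, ?_, ?_, ?_, ?_, ?_⟩
  · rw [sh_1]
    have e : a2 + 2 * (b 1 + 2 * a1) = (a2 + 2 * b 1) + a1 * 4 := by ring
    rw [e]
    exact dvd_add h.hA (Dvd.intro 4 rfl)
  · intro i h1 h2
    by_cases hi : i = 1
    · subst hi; rw [sh_1]
      have := h.bpos 1 le_rfl hn
      omega
    · rw [sh_ne hi]
      exact h.bpos (i - 1) (by omega) (by omega)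
  · intro i hi
    by_cases hi1 : i = 1
    · omega
    · rw [sh_ne hi1]
      exact h.bzero (i - 1) (by omega)
  · intro i h1 h2
    by_cases hi : i = 1
    · subst hi
      rw [sh_1, sh_ne (by omega), show (1:ℕ)+1-1 = 1 from rfl]
      omega
    · rw [sh_ne hi, sh_ne (by omega), show i+1-1 = i from rfl]
      have := h.bdec (i - 1) (by omega) (by omega)
      rw [show i - 1 + 1 = i by omega] at this
      exact this
  · rw [sh_1, sh_ne (by omega), show (2:ℕ)-1 = 1 from rfl]
  · intro i h1 h2
    by_cases hi : i = 2
    · subst hi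
      rw [sh_ne (by omega), show (2:ℕ)-1 = 1 from rfl, sh_1,
        sh_ne (by omega), show (2:ℕ)+1-1 = 2 from rfl]
      have e : b 1 + 2 * a1 + b 2 = b 1 + (b 2 + 2 * a1) := by ring
      rw [e]
      exact dvd_add (dvd_refl _) h.hB
    · rw [sh_ne (by omega), sh_ne (by omega), sh_ne (by omega)]
      have hm := h.hmid (i - 1) (by omega) (by omega)
      rw [show i - 1 - 1 = i - 2 by omega, show i - 1 + 1 = i by omega] at hm
      rw [show i + 1 - 1 = i by omega, show i - 1 - 1 = i - 2 by omega]
      exact hm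
  · intro _
    rw [show n + 1 - 1 = n by omega]
    by_cases hn1 : n = 1
    · subst hn1
      rw [sh_ne (by omega), show (2:ℕ)-1 = 1 from rfl, sh_1]
      have hb2 : b 2 = 0 := h.bzero 2 (by omega)
      have := h.hB
      rw [hb2] at this
      exact dvd_add (dvd_refl _) (by simpa using this)
    · rw [sh_ne (by omega), sh_ne (by omega), show n + 1 - 1 = n by omega]
      exact h.hend (by omega)
  · intro d hd1 hd2 h3
    refine h.hgcd d hd1 hd2 fun i hi1 hi2 => ?_
    have := h3 (i + 1) (by omega) (by omega)
    rw [sh_ne (by omega), show i + 1 - 1 = i by omega] at this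
    exact this

lemma sm_dr {n a1 a2 : ℕ} {c : ℕ → ℕ} (h : Sm (n + 1) a1 a2 c) (hn : 1 ≤ n)
    (ht : c 2 + 2 * a1 = c 1) : Sm n a1 a2 (dr c) := by
  have ha1 : 0 < a1 := lt_trans h.ha2 h.hlt
  refine ⟨h.ha2, h.hlt, h.hdvd, ?_, ?_, ?_, ?_, ?_, ?_, ?_, ?_⟩
  · rw [dr_pos le_rfl]
    have h4 : a1 ∣ a1 * 4 := Dvd.intro 4 rfl
    have hA := h.hA
    rw [← ht, show a2 + 2 * (c 2 + 2 * a1) = a1 * 4 + (a2 + 2 * c (1+1)) by ring] at hA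
    exact (Nat.dvd_add_right h4).mp hA
  · intro i h1 h2
    rw [dr_pos h1]
    exact h.bpos (i + 1) (by omega) (by omega)
  · intro i hi
    by_cases h0 : i = 0
    · subst h0; rfl
    · rw [dr_pos (by omega)]
      exact h.bzero (i + 1) (by omega)
  · intro i h1 h2
    rw [dr_pos (by omega), dr_pos (by omega)]
    have := h.bdec (i + 1) (by omega) (by omega)
    rw [show i + 1 + 1 = i + 2 from rfl] at this
    exact this
  · rw [dr_pos le_rfl, dr_pos (by omega)]
    by_cases hn1 : n = 1
    · subst hn1
      have h3 : c 3 = 0 := h.bzero 3 (by omega)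
      rw [show (2:ℕ)+1 = 3 from rfl, h3]
      have he := h.hend (by omega)
      rw [show (1:ℕ)+1-1 = 1 from rfl, ← ht] at he
      have : c 2 ∣ 2 * a1 := (Nat.dvd_add_right (dvd_refl _)).mp he
      simpa using this
    · have hm := h.hmid 2 (by omega) (by omega)
      rw [show (2:ℕ)-1 = 1 from rfl, ← ht, show (2:ℕ)+1 = 3 from rfl] at hm
      rw [show c 2 + 2 * a1 + c 3 = c 2 + (c 3 + 2 * a1) by ring] at hm
      exact (Nat.dvd_add_right (dvd_refl _)).mp hm
  · intro i h1 h2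
    rw [dr_pos (by omega), dr_pos (by omega), dr_pos (by omega)]
    have hm := h.hmid (i + 1) (by omega) (by omega)
    rw [show i + 1 - 1 = i by omega, show i + 1 + 1 = i + 2 from rfl] at hm
    rw [show i - 1 + 1 = i by omega]
    exact hm
  · intro h2
    rw [dr_pos (by omega), dr_pos (by omega)]
    have he := h.hend (by omega)
    rw [show n + 1 - 1 = n by omega] at he
    rw [show n - 1 + 1 = n by omega]
    exact he
  · intro d hd1 hd2 h3
    refine h.hgcd d hd1 hd2 fun i hi1 hi2 => ?_
    by_cases hi : i = 1
    · subst hi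
      rw [← ht]
      have := h3 1 le_rfl hn
      rw [dr_pos le_rfl] at this
      exact dvd_add (by simpa using this) (Dvd.dvd.mul_left hd1 2)
    · have := h3 (i - 1) (by omega) (by omega)
      rw [dr_pos (by omega), show i - 1 + 1 = i by omega] at this
      exact this

lemma sh_dr {n a1 a2 : ℕ} {c : ℕ → ℕ} (h : Sm (n + 1) a1 a2 c)
    (ht : c 2 + 2 * a1 = c 1) : sh a1 (dr c) = c := by
  funext i
  by_cases h0 : i = 0
  · subst h0
    rw [sh_ne (by omega), show (0:ℕ)-1 = 0 from rfl]
    exact ((h.bzero 0 (by omega)).symm : dr c 0 = c 0)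
  · by_cases h1 : i = 1
    · subst h1
      rw [sh_1, dr_pos le_rfl]
      exact ht
    · rw [sh_ne h1, dr_pos (by omega), show i - 1 + 1 = i by omega]

lemma dr_sh {n a1 a2 : ℕ} {b : ℕ → ℕ} (h : Sm n a1 a2 b) : dr (sh a1 b) = b := by
  funext i
  by_cases h0 : i = 0
  · subst h0
    exact ((h.bzero 0 (by omega)).symm : dr (sh a1 b) 0 = b 0)
  · rw [dr_pos (by omega), sh_ne (by omega), show i + 1 - 1 = i by omega]

lemma T_succ_eq (n : ℕ) (hn : 1 ≤ n) : T (n + 1) = Phi '' T n ∪ New (n + 1) := by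
  ext x
  obtain ⟨x1, x2, xb⟩ := x
  simp only [T, New, Phi, Set.mem_union, Set.mem_image, Set.mem_setOf_eq]
  constructor
  · intro hx
    by_cases ht : xb 2 + 2 * x1 = xb 1
    · left
      exact ⟨(x1, x2, dr xb), sm_dr hx hn ht, by
        simp only [Prod.mk.injEq]
        exact ⟨trivial, trivial, sh_dr hx ht⟩⟩
    · right
      exact ⟨hx, ht⟩
  · rintro (⟨y, hy, he⟩ | ⟨hx, -⟩)
    · obtain ⟨y1, y2, yb⟩ := y
      simp only [Prod.mk.injEq] at he
      obtain ⟨e1, e2, e3⟩ := he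
      subst e1; subst e2; rw [← e3]
      exact sm_sh hy hn
    · exact hx

lemma phi_injOn (n : ℕ) : Set.InjOn Phi (T n) := by
  rintro ⟨x1, x2, xb⟩ hx ⟨y1, y2, yb⟩ hy he
  simp only [Phi, Prod.mk.injEq] at he
  obtain ⟨e1, e2, e3⟩ := he
  subst e1; subst e2
  have hx' : Sm n x1 x2 xb := hx
  have hy' : Sm n x1 x2 yb := hy
  have hb : xb = yb := by
    have h1 := dr_sh hx'
    have h2 := dr_sh hy'
    rw [← h1, ← h2, e3]
  rw [hb]

lemma phi_disjoint (n : ℕ) : Disjoint (Phi '' T n) (New (n + 1)) := by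
  rw [Set.disjoint_left]
  rintro ⟨x1, x2, xb⟩ ⟨⟨y1, y2, yb⟩, hy, he⟩ hmem
  simp only [Phi, Prod.mk.injEq] at he
  obtain ⟨e1, e2, e3⟩ := he
  apply hmem.2
  show xb 2 + 2 * x1 = xb 1
  rw [← e3, ← e1]
  show sh y1 yb 2 + 2 * y1 = sh y1 yb 1
  rw [sh_ne (by omega), show (2:ℕ)-1 = 1 from rfl, sh_1]

lemma card_T_succ (n : ℕ) (hn : 1 ≤ n) (hfin : (T n).Finite)
    (hfin2 : (New (n + 1)).Finite) :
    (T (n + 1)).Finite ∧ (T (n + 1)).ncard = (T n).ncard + (New (n + 1)).ncard := by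
  have himg : (Phi '' T n).Finite := hfin.image _
  have hU : (T (n + 1)).Finite := by
    rw [T_succ_eq n hn]
    exact himg.union hfin2
  refine ⟨hU, ?_⟩
  rw [T_succ_eq n hn, Set.ncard_union_eq (phi_disjoint n) himg hfin2,
    Set.ncard_image_of_injOn (phi_injOn n)]



/-- gcd helper: if `gcd a2 b1` divides `b 2` then it is 1. -/
lemma gcd_one {n a1 a2 : ℕ} {b : ℕ → ℕ} (h : Sm n a1 a2 b)
    (hdb2 : Nat.gcd a2 (b 1) ∣ b 2) : Nat.gcd a2 (b 1) = 1 :=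
  h.hgcd _ ((Nat.gcd_dvd_left _ _).trans h.hdvd) (Nat.gcd_dvd_left _ _)
    (dvd_all h.hmid (Nat.gcd_dvd_right _ _) hdb2)

lemma a2_le_two {n a1 a2 : ℕ} {b : ℕ → ℕ} (h : Sm n a1 a2 b)
    (hdb2 : Nat.gcd a2 (b 1) ∣ b 2) (hd : a2 ∣ 2 * b 1) : a2 = 1 ∨ a2 = 2 := by
  have hcop : Nat.Coprime a2 (b 1) := gcd_one h hdb2
  have h2 : a2 ∣ 2 := hcop.dvd_of_dvd_mul_right hd
  have := Nat.le_of_dvd (by norm_num) h2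
  have := h.ha2
  interval_cases a2
  · exact Or.inl rfl
  · exact Or.inr rfl

lemma not_all_even {n a1 a2 : ℕ} {b : ℕ → ℕ} (h : Sm n a1 a2 b)
    (h1 : 2 ∣ a1) (h2 : 2 ∣ a2) (h3 : 2 ∣ b 1) (h4 : 2 ∣ b 2) : False := by
  have := h.hgcd 2 h1 h2 (dvd_all h.hmid h3 h4)
  omega

/-- basic facts bundle -/
lemma basics {n a1 a2 : ℕ} {b : ℕ → ℕ} (h : Sm n a1 a2 b) (hn : 2 ≤ n) :
    0 < b 1 ∧ 0 < b 2 ∧ b 2 < b 1 ∧ 0 < a1 := by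
  have hb1 := h.bpos 1 le_rfl (by omega)
  have hb2 := h.bpos 2 (by omega) hn
  have hb21 : b 2 < b 1 := by
    have := h.bdec 1 le_rfl (by omega)
    rwa [show (1:ℕ)+1 = 2 from rfl] at this
  exact ⟨hb1, hb2, hb21, lt_trans h.ha2 h.hlt⟩

/-- Case s = 2, t = 3 : family 1. -/
lemma case_s2t3 {n a1 a2 : ℕ} {b : ℕ → ℕ} (h : Sm n a1 a2 b) (hn : 2 ≤ n)
    (hs : a2 + 2 * b 1 = a1 * 2) (ht : b 2 + 2 * a1 = b 1 * 3) :
    a1 = 2 * n ∧ a2 = 2 ∧ b = bf1 n := by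
  obtain ⟨hb1, hb2, hb21, ha1⟩ := basics h hn
  have ha2 := h.ha2
  have hlt := h.hlt
  have hgt : b 1 < a1 := by omega
  have hα : a2 = (a1 - b 1) * 2 := by omega
  have hα0 : a1 - b 1 ∣ a2 := Dvd.intro 2 hα.symm
  have hα1 : a1 - b 1 ∣ a1 := hα0.trans h.hdvd
  have hα2 : a1 - b 1 ∣ b 1 := by
    have := Nat.dvd_sub hα1 (dvd_refl (a1 - b 1))
    rwa [show a1 - (a1 - b 1) = b 1 by omega] at this
  have hb2e : b 2 = b 1 - 2 * (a1 - b 1) := by omega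
  have hα3 : a1 - b 1 ∣ b 2 := by
    rw [hb2e]
    exact Nat.dvd_sub hα2 (Dvd.dvd.mul_left (dvd_refl _) 2)
  have hone : a1 - b 1 = 1 := h.hgcd _ hα1 hα0 (dvd_all h.hmid hα2 hα3)
  have ha2e : a2 = 2 := by omega
  have h2a1 : 2 ∣ a1 := ha2e ▸ h.hdvd
  have hst : b (1 + 1) + 2 = b 1 := by
    rw [show (1:ℕ)+1 = 2 from rfl]; omega
  obtain ⟨hform, hdvd2⟩ := ap2 h.bpos h.bdec h.hmid h.hend le_rfl (by omega) hst
  have hbnle : b n ≤ 2 := Nat.le_of_dvd (by norm_num) hdvd2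
  have hfn := hform n (by omega) le_rfl
  have hbn1 : b n = 1 := by
    have := h.bpos n (by omega) le_rfl
    -- b 1 = a1 - 1 is odd
    omega
  have hb1e : b 1 = 2 * n - 1 := by omega
  refine ⟨by omega, ha2e, ?_⟩
  funext i
  by_cases hin : 1 ≤ i ∧ i ≤ n
  · rw [bf1_in hin.1 hin.2]
    have := hform i hin.1 hin.2
    omega
  · rw [bf1_out hin]
    exact h.bzero i hin

/-- Case s = 4, t = 2 : family 10. -/
lemma case_s4t2 {n a1 a2 : ℕ} {b : ℕ → ℕ} (h : Sm n a1 a2 b) (hn : 2 ≤ n)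
    (hs : a2 + 2 * b 1 = a1 * 4) (ht : b 2 + 2 * a1 = b 1 * 2) :
    7 ≤ n ∧ n % 4 = 3 ∧ a1 = (n + 1) / 2 ∧ a2 = 2 ∧ b = bf10 n := by
  obtain ⟨hb1, hb2, hb21, ha1⟩ := basics h hn
  have ha2 := h.ha2
  have hlt := h.hlt
  have hb2e : b 2 = 2 * a1 - a2 := by omega
  have hαe : a2 = (b 1 - b 2) * 2 := by omega
  have hα0 : b 1 - b 2 ∣ a2 := Dvd.intro 2 hαe.symm
  have hα1 : b 1 - b 2 ∣ a1 := hα0.trans h.hdvd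
  have hα2 : b 1 - b 2 ∣ b 2 := by
    have := Nat.dvd_sub (hα1.mul_left 2) hα0
    rwa [← hb2e] at this
  have hα3 : b 1 - b 2 ∣ b 1 := by
    have := Nat.dvd_add hα2 (dvd_refl (b 1 - b 2))
    rwa [show b 2 + (b 1 - b 2) = b 1 by omega] at this
  have hone : b 1 - b 2 = 1 := h.hgcd _ hα1 hα0 (dvd_all h.hmid hα3 hα2)
  have ha2e : a2 = 2 := by omega
  have h2a1 : 2 ∣ a1 := ha2e ▸ h.hdvd
  have hst : b (1 + 1) + 1 = b 1 := by
    rw [show (1:ℕ)+1 = 2 from rfl]; omega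
  obtain ⟨hform, hbn⟩ := ap1 h.bpos h.bdec h.hmid h.hend le_rfl (by omega) hst
  have hfn := hform n (by omega) le_rfl
  -- b 1 = n, 2*a1 = n + 1
  have hb1e : b 1 = n := by omega
  have h2a : 2 * a1 = n + 1 := by omega
  have ha1ge : 4 ≤ a1 := by omega
  refine ⟨by omega, by omega, by omega, ha2e, ?_⟩
  funext i
  by_cases hin : 1 ≤ i ∧ i ≤ n
  · rw [bf10_in hin.1 hin.2]
    have := hform i hin.1 hin.2
    omega
  · rw [bf10_out hin]
    exact h.bzero i hin

/-- Case s = 1, t = 5 : families 4, 5, 7, 9. -/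
lemma case_s1t5 {n a1 a2 : ℕ} {b : ℕ → ℕ} (h : Sm n a1 a2 b) (hn : 2 ≤ n)
    (hs : a2 + 2 * b 1 = a1) (ht : b 2 + 2 * a1 = b 1 * 5) :
    (a1 = 4 * n - 1 ∧ a2 = 1 ∧ b = bf1 n) ∨ (a1 = 4 * n + 1 ∧ a2 = 1 ∧ b = bf5 n) ∨
    (4 ≤ n ∧ a1 = 8 * n - 16 ∧ a2 = 2 ∧ b = bfA n) ∨
    (a1 = 8 * n - 4 ∧ a2 = 2 ∧ b = bfB n) := by
  obtain ⟨hb1, hb2, hb21, ha1⟩ := basics h hn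
  have ha2 := h.ha2
  have hlt := h.hlt
  have hb2eq : b 2 + 2 * a2 = b 1 := by omega
  have hgb2 : Nat.gcd a2 (b 1) ∣ b 2 := by
    rw [show b 2 = b 1 - 2 * a2 by omega]
    exact Nat.dvd_sub (Nat.gcd_dvd_right _ _) ((Nat.gcd_dvd_left _ _).mul_left 2)
  have ha2d : a2 ∣ 2 * b 1 := by
    have := h.hdvd
    rw [← hs] at this
    exact (Nat.dvd_add_right (dvd_refl a2)).mp this
  rcases a2_le_two h hgb2 ha2d with ha2e | ha2e
  · -- a2 = 1
    have hst : b (1 + 1) + 2 = b 1 := by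
      rw [show (1:ℕ)+1 = 2 from rfl]; omega
    obtain ⟨hform, hd2⟩ := ap2 h.bpos h.bdec h.hmid h.hend le_rfl (by omega) hst
    have hbnle : b n ≤ 2 := Nat.le_of_dvd (by norm_num) hd2
    have hbnpos := h.bpos n (by omega) le_rfl
    have hfn := hform n (by omega) le_rfl
    rcases show b n = 1 ∨ b n = 2 by omega with hbn | hbn
    · left
      refine ⟨by omega, ha2e, ?_⟩
      funext i
      by_cases hin : 1 ≤ i ∧ i ≤ n
      · rw [bf1_in hin.1 hin.2]
        have := hform i hin.1 hin.2
        omega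
      · rw [bf1_out hin]; exact h.bzero i hin
    · right; left
      refine ⟨by omega, ha2e, ?_⟩
      funext i
      by_cases hin : 1 ≤ i ∧ i ≤ n
      · rw [bf5_in hin.1 hin.2]
        have := hform i hin.1 hin.2
        omega
      · rw [bf5_out hin]; exact h.bzero i hin
  · -- a2 = 2
    have hodd : b 1 % 2 = 1 := by
      by_contra h'
      exact not_all_even h ⟨b 1 + 1, by omega⟩ ⟨1, by omega⟩ ⟨b 1 / 2, by omega⟩
        ⟨b 2 / 2, by omega⟩
    have hst : b (1 + 1) + 4 = b 1 := by
      rw [show (1:ℕ)+1 = 2 from rfl]; omega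
    rcases ap4 h.bpos h.bdec h.hmid h.hend le_rfl (by omega) hst hodd with
      ⟨hform, hbn⟩ | ⟨hj2, hform, h3v, h2v, h1v⟩
    · right; right; right
      have hfn := hform n (by omega) le_rfl
      refine ⟨by omega, ha2e, ?_⟩
      funext i
      by_cases hin : 1 ≤ i ∧ i ≤ n
      · rw [bfB_in hin.1 hin.2]
        have := hform i hin.1 hin.2
        omega
      · rw [bfB_out hin]; exact h.bzero i hin
    · right; right; left
      have hfn2 := hform (n - 2) (by omega) le_rfl
      have hb1e : b 1 = 4 * n - 9 := by omega
      have hn4 : 4 ≤ n := by omega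
      refine ⟨hn4, by omega, ha2e, ?_⟩
      funext i
      by_cases hin : 1 ≤ i ∧ i ≤ n
      · rcases show (1 ≤ i ∧ i ≤ n - 2) ∨ i = n - 1 ∨ i = n by omega with hz | hz | hz
        · rw [bfA_in hz.1 hz.2]
          have := hform i hz.1 hz.2
          omega
        · subst hz; rw [bfA_n1 (by omega)]; exact h2v
        · subst hz; rw [bfA_n (by omega)]; exact h1v
      · rw [bfA_out (by omega) hin]; exact h.bzero i hin

/-- Case s = 1, t = 6 : sporadic (8,2,(3,2,1)) at n = 3. -/
lemma case_s1t6 {n a1 a2 : ℕ} {b : ℕ → ℕ} (h : Sm n a1 a2 b) (hn : 2 ≤ n)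
    (hs : a2 + 2 * b 1 = a1) (ht : b 2 + 2 * a1 = b 1 * 6) :
    n = 3 ∧ a1 = 8 ∧ a2 = 2 ∧ b = gf 3 2 1 := by
  obtain ⟨hb1, hb2, hb21, ha1⟩ := basics h hn
  have ha2 := h.ha2
  have hlt := h.hlt
  have hb2eq : b 2 + 2 * a2 = b 1 * 2 := by omega
  have hgb2 : Nat.gcd a2 (b 1) ∣ b 2 := by
    rw [show b 2 = 2 * b 1 - 2 * a2 by omega]
    exact Nat.dvd_sub ((Nat.gcd_dvd_right _ _).mul_left 2) ((Nat.gcd_dvd_left _ _).mul_left 2)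
  have ha2d : a2 ∣ 2 * b 1 := by
    have := h.hdvd
    rw [← hs] at this
    exact (Nat.dvd_add_right (dvd_refl a2)).mp this
  rcases a2_le_two h hgb2 ha2d with ha2e | ha2e
  · omega
  · have hodd : b 1 % 2 = 1 := by
      by_contra h'
      exact not_all_even h ⟨b 1 + 1, by omega⟩ ⟨1, by omega⟩ ⟨b 1 / 2, by omega⟩
        ⟨b 2 / 2, by omega⟩
    have hb1e : b 1 = 3 := by omega
    have hb2e : b 2 = 2 := by omega
    have ha1e : a1 = 8 := by omega
    have hb3 : n ≥ 3 → b 3 = 1 := by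
      intro h3
      obtain ⟨c, hc⟩ := h.hmid 2 (by omega) (by omega)
      rw [show (2:ℕ)-1 = 1 from rfl, show (2:ℕ)+1 = 3 from rfl] at hc
      have hd := h.bdec 2 (by omega) (by omega)
      rw [show (2:ℕ)+1 = 3 from rfl] at hd
      have := h.bpos 3 (by omega) (by omega)
      omega
    have hne2 : n ≠ 2 := by
      intro h2
      subst h2
      obtain ⟨c, hc⟩ := h.hend le_rfl
      rw [show (2:ℕ)-1 = 1 from rfl, hb1e, hb2e] at hc
      omega
    have hle3 : n ≤ 3 := by
      by_contra h4
      have hb3v := hb3 (by omega)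
      have hd := h.bdec 3 (by omega) (by omega)
      rw [show (3:ℕ)+1 = 4 from rfl] at hd
      have := h.bpos 4 (by omega) (by omega)
      omega
    have hn3 : n = 3 := by omega
    subst hn3
    refine ⟨rfl, ha1e, ha2e, ?_⟩
    obtain ⟨e1, e2, e3, e0⟩ := gf_ev 3 2 1
    funext i
    rcases show i = 1 ∨ i = 2 ∨ i = 3 ∨ (i = 0 ∨ 4 ≤ i) by omega with hi | hi | hi | hi
    · subst hi; rw [e1]; exact hb1e
    · subst hi; rw [e2]; exact hb2e
    · subst hi; rw [e3]; exact hb3 (by omega)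
    · rw [e0 i hi]; exact h.bzero i (by omega)

/-- Case s = 1, t ∈ {7, 8} : impossible. -/
lemma case_s1t78 {n a1 a2 : ℕ} {b : ℕ → ℕ} (h : Sm n a1 a2 b) (hn : 2 ≤ n) {t : ℕ}
    (htv : t = 7 ∨ t = 8) (hs : a2 + 2 * b 1 = a1) (ht : b 2 + 2 * a1 = b 1 * t) :
    False := by
  obtain ⟨hb1, hb2, hb21, ha1⟩ := basics h hn
  have ha2 := h.ha2
  have hlt := h.hlt
  have hb2eq : b 2 + 2 * a2 = b 1 * (t - 4) := by
    rcases htv with rfl | rfl <;> omega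
  have hgb2 : Nat.gcd a2 (b 1) ∣ b 2 := by
    rw [show b 2 = b 1 * (t - 4) - 2 * a2 by omega]
    exact Nat.dvd_sub ((Nat.gcd_dvd_right _ _).mul_right _) ((Nat.gcd_dvd_left _ _).mul_left 2)
  have ha2d : a2 ∣ 2 * b 1 := by
    have := h.hdvd
    rw [← hs] at this
    exact (Nat.dvd_add_right (dvd_refl a2)).mp this
  have := a2_le_two h hgb2 ha2d
  rcases htv with rfl | rfl <;> omega

/-- Case s = 3, t = 2 : families 2, 3, 6, 8 and two sporadics. -/
lemma case_s3t2 {n a1 a2 : ℕ} {b : ℕ → ℕ} (h : Sm n a1 a2 b) (hn : 2 ≤ n)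
    (hs : a2 + 2 * b 1 = a1 * 3) (ht : b 2 + 2 * a1 = b 1 * 2) :
    (3 ≤ n ∧ a1 = 4 * n - 7 ∧ a2 = 1 ∧ b = bf2 n) ∨
    (3 ≤ n ∧ a1 = 4 * n - 5 ∧ a2 = 1 ∧ b = bf3 n) ∨
    (5 ≤ n ∧ a1 = 8 * n - 28 ∧ a2 = 2 ∧ b = bf6 n) ∨
    (3 ≤ n ∧ a1 = 8 * n - 16 ∧ a2 = 2 ∧ b = bf8 n) ∨
    (n = 2 ∧ a1 = 3 ∧ a2 = 1 ∧ b = gf 4 2 0) ∨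
    (n = 3 ∧ a1 = 4 ∧ a2 = 2 ∧ b = gf 5 2 1) := by
  obtain ⟨hb1, hb2, hb21, ha1⟩ := basics h hn
  have ha2 := h.ha2
  have hlt := h.hlt
  have hb2e : b 2 + a2 = a1 := by omega
  have hgb2 : Nat.gcd a2 (b 1) ∣ b 2 := by
    rw [show b 2 = a1 - a2 by omega]
    exact Nat.dvd_sub ((Nat.gcd_dvd_left _ _).trans h.hdvd) (Nat.gcd_dvd_left _ _)
  have ha2d : a2 ∣ 2 * b 1 := by
    rw [show 2 * b 1 = 3 * a1 - a2 by omega]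
    exact Nat.dvd_sub (h.hdvd.mul_left 3) dvd_rfl
  rcases a2_le_two h hgb2 ha2d with ha2e | ha2e
  · -- a2 = 1
    have hodd : a1 % 2 = 1 := by omega
    by_cases ha13 : a1 = 3
    · -- sporadic (3,1,(4,2)) at n = 2
      have hb1v : b 1 = 4 := by omega
      have hb2v : b 2 = 2 := by omega
      have hn2 : n = 2 := by
        by_contra hge
        obtain ⟨c, hc⟩ := h.hmid 2 (by omega) (by omega)
        rw [show (2:ℕ)-1 = 1 from rfl, show (2:ℕ)+1 = 3 from rfl, hb1v, hb2v] at hc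
        have hd := h.bdec 2 (by omega) (by omega)
        rw [show (2:ℕ)+1 = 3 from rfl] at hd
        have := h.bpos 3 (by omega) (by omega)
        omega
      subst hn2
      refine Or.inr (Or.inr (Or.inr (Or.inr (Or.inl ⟨rfl, ha13, ha2e, ?_⟩))))
      obtain ⟨e1, e2, e3, e0⟩ := gf_ev 4 2 0
      funext i
      rcases show i = 1 ∨ i = 2 ∨ i = 3 ∨ (i = 0 ∨ 4 ≤ i) by omega with hi | hi | hi | hi
      · subst hi; rw [e1]; exact hb1v
      · subst hi; rw [e2]; exact hb2v
      · subst hi; rw [e3]; exact h.bzero 3 (by omega)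
      · rw [e0 i hi]; exact h.bzero i (by omega)
    · -- a1 = 2e+1, e ≥ 2
      obtain ⟨e, he⟩ : ∃ e, a1 = 2 * e + 1 := ⟨a1 / 2, by omega⟩
      have he2 : 2 ≤ e := by omega
      have hb1v : b 1 = 3 * e + 1 := by omega
      have hb2v : b 2 = 2 * e := by omega
      have hn3 : 3 ≤ n := by
        by_contra hlt3
        have hn2 : n = 2 := by omega
        subst hn2
        have hc := h.hend le_rfl
        rw [show (2:ℕ)-1 = 1 from rfl] at hc
        have := dvd_eq_self hc (by omega) (by omega)
        omega
      have hm := h.hmid 2 (by omega) (by omega)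
      rw [show (2:ℕ)-1 = 1 from rfl, show (2:ℕ)+1 = 3 from rfl] at hm
      have hb3pos := h.bpos 3 (by omega) (by omega)
      have hb32 : b 3 < b 2 := by
        have := h.bdec 2 (by omega) (by omega)
        rwa [show (2:ℕ)+1 = 3 from rfl] at this
      rw [show b 1 + b 3 = b 2 + (e + 1 + b 3) by omega] at hm
      have hm2 : b 2 ∣ e + 1 + b 3 := (Nat.dvd_add_right (dvd_refl _)).mp hm
      have hb3v : b 3 + 1 = e := by
        have := dvd_eq_self hm2 (by omega) (by omega)
        omega
      -- unified: formula on [3,n] and b n ∣ 2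
      have hstar : (∀ i, 3 ≤ i → i ≤ n → b i + 2 * (i - 3) = b 3) ∧ b n ∣ 2 := by
        rcases show n = 3 ∨ 4 ≤ n by omega with hn' | hn'
        · subst hn'
          refine ⟨fun i h3 hle => by rw [show i = 3 by omega]; omega, ?_⟩
          have hc := h.hend (by omega)
          rw [show (3:ℕ)-1 = 2 from rfl, show b 2 = b 3 * 2 + 2 by omega] at hc
          exact (Nat.dvd_add_right (Dvd.intro 2 rfl)).mp hc
        · have hm3 := h.hmid 3 (by omega) (by omega)
          rw [show (3:ℕ)-1 = 2 from rfl, show (3:ℕ)+1 = 4 from rfl] at hm3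
          have hb4pos := h.bpos 4 (by omega) (by omega)
          have hb43 : b 4 < b 3 := by
            have := h.bdec 3 (by omega) (by omega)
            rwa [show (3:ℕ)+1 = 4 from rfl] at this
          rw [show b 2 + b 4 = b 3 + (b 3 + 2 + b 4) by omega] at hm3
          have hm3' : b 3 ∣ b 3 + 2 + b 4 := (Nat.dvd_add_right (dvd_refl _)).mp hm3
          rw [show b 3 + 2 + b 4 = b 3 + (2 + b 4) by omega] at hm3'
          have hm3'' : b 3 ∣ 2 + b 4 := (Nat.dvd_add_right (dvd_refl _)).mp hm3'
          have hst : b (3 + 1) + 2 = b 3 := by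
            rw [show (3:ℕ)+1 = 4 from rfl]
            have := dvd_eq_self hm3'' (by omega) (by omega)
            omega
          exact ap2 h.bpos h.bdec h.hmid h.hend (by omega) (by omega) hst
      obtain ⟨hform, hd2⟩ := hstar
      have hbnle : b n ≤ 2 := Nat.le_of_dvd (by norm_num) hd2
      have hbnpos := h.bpos n (by omega) le_rfl
      have hfn := hform n (by omega) le_rfl
      rcases show b n = 1 ∨ b n = 2 by omega with hbn | hbn
      · -- family 2
        left
        have hev : e = 2 * n - 4 := by omega
        refine ⟨hn3, by omega, ha2e, ?_⟩
        funext i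
        by_cases hin : 1 ≤ i ∧ i ≤ n
        · rcases show i = 1 ∨ i = 2 ∨ 3 ≤ i by omega with hi | hi | hi
          · subst hi; rw [bf2_1]; omega
          · subst hi; rw [bf2_2]; omega
          · rw [bf2_in hi hin.2]
            have := hform i hi hin.2
            omega
        · rw [bf2_out hn3 hin]; exact h.bzero i hin
      · -- family 3
        right; left
        have hev : e = 2 * n - 3 := by omega
        refine ⟨hn3, by omega, ha2e, ?_⟩
        funext i
        by_cases hin : 1 ≤ i ∧ i ≤ n
        · rcases show i = 1 ∨ i = 2 ∨ 3 ≤ i by omega with hi | hi | hi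
          · subst hi; rw [bf3_1]; omega
          · subst hi; rw [bf3_2]; omega
          · rw [bf3_in hi hin.2]
            have := hform i hi hin.2
            omega
        · rw [bf3_out hn3 hin]; exact h.bzero i hin
  · -- a2 = 2
    obtain ⟨k, hk⟩ := h.hdvd
    rw [ha2e] at hk
    have hk2 : 2 ≤ k := by omega
    have hb1v : b 1 = 3 * k - 1 := by omega
    have hb2v : b 2 = 2 * k - 2 := by omega
    have hkeven : k % 2 = 0 := by
      by_contra hko
      exact not_all_even h ⟨k, hk⟩ ⟨1, by omega⟩ ⟨b 1 / 2, by omega⟩ ⟨b 2 / 2, by omega⟩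
    by_cases hk4 : k = 2
    · -- sporadic (4,2,(5,2,1)) at n = 3
      have hb1x : b 1 = 5 := by omega
      have hb2x : b 2 = 2 := by omega
      have hn3 : 3 ≤ n := by
        by_contra hge
        have hn2 : n = 2 := by omega
        subst hn2
        obtain ⟨c, hc⟩ := h.hend le_rfl
        rw [show (2:ℕ)-1 = 1 from rfl, hb1x, hb2x] at hc
        omega
      have hb3x : b 3 = 1 := by
        obtain ⟨c, hc⟩ := h.hmid 2 (by omega) (by omega)
        rw [show (2:ℕ)-1 = 1 from rfl, show (2:ℕ)+1 = 3 from rfl, hb1x, hb2x] at hc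
        have hd := h.bdec 2 (by omega) (by omega)
        rw [show (2:ℕ)+1 = 3 from rfl] at hd
        have := h.bpos 3 (by omega) (by omega)
        omega
      have hn3' : n = 3 := by
        by_contra hge
        have hd := h.bdec 3 (by omega) (by omega)
        rw [show (3:ℕ)+1 = 4 from rfl] at hd
        have := h.bpos 4 (by omega) (by omega)
        omega
      subst hn3'
      refine Or.inr (Or.inr (Or.inr (Or.inr (Or.inr ⟨rfl, by omega, ha2e, ?_⟩))))
      obtain ⟨e1, e2, e3, e0⟩ := gf_ev 5 2 1
      funext i
      rcases show i = 1 ∨ i = 2 ∨ i = 3 ∨ (i = 0 ∨ 4 ≤ i) by omega with hi | hi | hi | hi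
      · subst hi; rw [e1]; exact hb1x
      · subst hi; rw [e2]; exact hb2x
      · subst hi; rw [e3]; exact hb3x
      · rw [e0 i hi]; exact h.bzero i (by omega)
    · -- k ≥ 4 even
      have hk4' : 4 ≤ k := by omega
      have hn3 : 3 ≤ n := by
        by_contra hge
        have hn2 : n = 2 := by omega
        subst hn2
        have hc := h.hend le_rfl
        rw [show (2:ℕ)-1 = 1 from rfl] at hc
        have := dvd_eq_self hc (by omega) (by omega)
        omega
      have hm := h.hmid 2 (by omega) (by omega)
      rw [show (2:ℕ)-1 = 1 from rfl, show (2:ℕ)+1 = 3 from rfl] at hm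
      have hb3pos := h.bpos 3 (by omega) (by omega)
      have hb32 : b 3 < b 2 := by
        have := h.bdec 2 (by omega) (by omega)
        rwa [show (2:ℕ)+1 = 3 from rfl] at this
      rw [show b 1 + b 3 = b 2 + (k + 1 + b 3) by omega] at hm
      have hm2 : b 2 ∣ k + 1 + b 3 := (Nat.dvd_add_right (dvd_refl _)).mp hm
      have hb3v : b 3 + 3 = k := by
        have := dvd_eq_self hm2 (by omega) (by omega)
        omega
      by_cases hk8 : k = 4
      · -- family 8 at n = 3
        have hb3x : b 3 = 1 := by omega
        have hn3' : n = 3 := by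
          by_contra hge
          have hd := h.bdec 3 (by omega) (by omega)
          rw [show (3:ℕ)+1 = 4 from rfl] at hd
          have := h.bpos 4 (by omega) (by omega)
          omega
        subst hn3'
        refine Or.inr (Or.inr (Or.inr (Or.inl ⟨le_rfl, by omega, ha2e, ?_⟩)))
        funext i
        by_cases hin : 1 ≤ i ∧ i ≤ 3
        · rcases show i = 1 ∨ i = 2 ∨ i = 3 by omega with hi | hi | hi
          · subst hi; rw [bf8_1]; omega
          · subst hi; rw [bf8_2]; omega
          · subst hi; rw [bf8_in (by omega) (by omega)]; omega
        · rw [bf8_out (by omega) hin]; exact h.bzero i hin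
      · by_cases hk6 : k = 6
        · -- family 6 at n = 5
          have hb3x : b 3 = 3 := by omega
          have hn4 : 4 ≤ n := by
            by_contra hge
            have hn3' : n = 3 := by omega
            subst hn3'
            obtain ⟨c, hc⟩ := h.hend (by omega)
            rw [show (3:ℕ)-1 = 2 from rfl, hb2v, hb3x] at hc
            omega
          have hb4x : b 4 = 2 := by
            obtain ⟨c, hc⟩ := h.hmid 3 (by omega) (by omega)
            rw [show (3:ℕ)-1 = 2 from rfl, show (3:ℕ)+1 = 4 from rfl, hb2v, hb3x] at hc
            have hd := h.bdec 3 (by omega) (by omega)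
            rw [show (3:ℕ)+1 = 4 from rfl] at hd
            have := h.bpos 4 (by omega) (by omega)
            omega
          have hn5 : 5 ≤ n := by
            by_contra hge
            have hn4' : n = 4 := by omega
            subst hn4'
            obtain ⟨c, hc⟩ := h.hend (by omega)
            rw [show (4:ℕ)-1 = 3 from rfl, hb3x, hb4x] at hc
            omega
          have hb5x : b 5 = 1 := by
            obtain ⟨c, hc⟩ := h.hmid 4 (by omega) (by omega)
            rw [show (4:ℕ)-1 = 3 from rfl, show (4:ℕ)+1 = 5 from rfl, hb3x, hb4x] at hc
            have hd := h.bdec 4 (by omega) (by omega)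
            rw [show (4:ℕ)+1 = 5 from rfl] at hd
            have := h.bpos 5 (by omega) (by omega)
            omega
          have hn5' : n = 5 := by
            by_contra hge
            have hd := h.bdec 5 (by omega) (by omega)
            rw [show (5:ℕ)+1 = 6 from rfl] at hd
            have := h.bpos 6 (by omega) (by omega)
            omega
          subst hn5'
          refine Or.inr (Or.inr (Or.inl ⟨le_rfl, by omega, ha2e, ?_⟩))
          funext i
          by_cases hin : 1 ≤ i ∧ i ≤ 5
          · rcases show i = 1 ∨ i = 2 ∨ i = 3 ∨ i = 4 ∨ i = 5 by omega with hi | hi | hi | hi | hi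
            · subst hi; rw [bf6_1]; omega
            · subst hi; rw [bf6_2]; omega
            · subst hi; rw [bf6_in (by omega) (by omega)]; omega
            · subst hi; rw [show (4:ℕ) = 5 - 1 from rfl, bf6_n1 (by omega)]
              rw [show (5:ℕ)-1 = 4 from rfl]; exact hb4x
            · subst hi; rw [bf6_n (by omega)]; exact hb5x
          · rw [bf6_out (by omega) hin]; exact h.bzero i hin
        · -- k ≥ 8
          have hk8' : 8 ≤ k := by omega
          have hb3odd : b 3 % 2 = 1 := by omega
          have hn4 : 4 ≤ n := by
            by_contra hge
            have hn3' : n = 3 := by omega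
            subst hn3'
            have hc := h.hend (by omega)
            rw [show (3:ℕ)-1 = 2 from rfl, show b 2 = b 3 * 2 + 4 by omega] at hc
            have hc2 : b 3 ∣ 4 := by
              have := (Nat.dvd_add_right (Dvd.intro 2 rfl)).mp hc
              exact this
            have := Nat.le_of_dvd (by norm_num) hc2
            omega
          have hm3 := h.hmid 3 (by omega) (by omega)
          rw [show (3:ℕ)-1 = 2 from rfl, show (3:ℕ)+1 = 4 from rfl] at hm3
          have hb4pos := h.bpos 4 (by omega) (by omega)
          have hb43 : b 4 < b 3 := by
            have := h.bdec 3 (by omega) (by omega)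
            rwa [show (3:ℕ)+1 = 4 from rfl] at this
          rw [show b 2 + b 4 = b 3 + (b 3 + (4 + b 4)) by omega] at hm3
          have hm3' : b 3 ∣ b 3 + (4 + b 4) := (Nat.dvd_add_right (dvd_refl _)).mp hm3
          have hm3'' : b 3 ∣ 4 + b 4 := (Nat.dvd_add_right (dvd_refl _)).mp hm3'
          have hst : b (3 + 1) + 4 = b 3 := by
            rw [show (3:ℕ)+1 = 4 from rfl]
            have := dvd_eq_self hm3'' (by omega) (by omega)
            omega
          rcases ap4 h.bpos h.bdec h.hmid h.hend (by omega) (by omega) hst hb3odd with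
            ⟨hform, hbn⟩ | ⟨hj2, hform, h3v, h2v, h1v⟩
          · -- family 8
            have hfn := hform n (by omega) le_rfl
            have hkv : k = 4 * n - 8 := by omega
            refine Or.inr (Or.inr (Or.inr (Or.inl ⟨hn3, by omega, ha2e, ?_⟩)))
            funext i
            by_cases hin : 1 ≤ i ∧ i ≤ n
            · rcases show i = 1 ∨ i = 2 ∨ 3 ≤ i by omega with hi | hi | hi
              · subst hi; rw [bf8_1]; omega
              · subst hi; rw [bf8_2]; omega
              · rw [bf8_in hi hin.2]
                have := hform i hi hin.2
                omega
            · rw [bf8_out (by omega) hin]; exact h.bzero i hin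
          · -- family 6
            have hfn2 := hform (n - 2) (by omega) le_rfl
            have hkv : k = 4 * n - 14 := by omega
            have hn5 : 5 ≤ n := by omega
            refine Or.inr (Or.inr (Or.inl ⟨hn5, by omega, ha2e, ?_⟩))
            funext i
            by_cases hin : 1 ≤ i ∧ i ≤ n
            · rcases show i = 1 ∨ i = 2 ∨ (3 ≤ i ∧ i ≤ n - 2) ∨ i = n - 1 ∨ i = n by omega
                with hi | hi | hi | hi | hi
              · subst hi; rw [bf6_1]; omega
              · subst hi; rw [bf6_2]; omega
              · rw [bf6_in hi.1 hi.2]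
                have := hform i hi.1 hi.2
                omega
              · subst hi; rw [bf6_n1 (by omega)]; exact h2v
              · subst hi; rw [bf6_n (by omega)]; exact h1v
            · rw [bf6_out (by omega) hin]; exact h.bzero i hin

/-- The 13-fold classification disjunction. -/
def Concl (n a1 a2 : ℕ) (b : ℕ → ℕ) : Prop :=
  (a1 = 2 * n ∧ a2 = 2 ∧ b = bf1 n) ∨
  (3 ≤ n ∧ a1 = 4 * n - 7 ∧ a2 = 1 ∧ b = bf2 n) ∨
  (3 ≤ n ∧ a1 = 4 * n - 5 ∧ a2 = 1 ∧ b = bf3 n) ∨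
  (a1 = 4 * n - 1 ∧ a2 = 1 ∧ b = bf1 n) ∨
  (a1 = 4 * n + 1 ∧ a2 = 1 ∧ b = bf5 n) ∨
  (5 ≤ n ∧ a1 = 8 * n - 28 ∧ a2 = 2 ∧ b = bf6 n) ∨
  (4 ≤ n ∧ a1 = 8 * n - 16 ∧ a2 = 2 ∧ b = bfA n) ∨
  (3 ≤ n ∧ a1 = 8 * n - 16 ∧ a2 = 2 ∧ b = bf8 n) ∨
  (a1 = 8 * n - 4 ∧ a2 = 2 ∧ b = bfB n) ∨
  (7 ≤ n ∧ n % 4 = 3 ∧ a1 = (n + 1) / 2 ∧ a2 = 2 ∧ b = bf10 n) ∨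
  (n = 2 ∧ a1 = 3 ∧ a2 = 1 ∧ b = gf 4 2 0) ∨
  (n = 3 ∧ a1 = 4 ∧ a2 = 2 ∧ b = gf 5 2 1) ∨
  (n = 3 ∧ a1 = 8 ∧ a2 = 2 ∧ b = gf 3 2 1)

theorem new_classify {n a1 a2 : ℕ} {b : ℕ → ℕ} (hn : 2 ≤ n) (h : Sm n a1 a2 b)
    (hT : b 2 + 2 * a1 ≠ b 1) : Concl n a1 a2 b := by
  obtain ⟨hb1, hb2, hb21, ha1⟩ := basics h hn
  have ha2 := h.ha2
  have hlt := h.hlt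
  obtain ⟨k, hk⟩ := h.hdvd
  have hk2 : 2 ≤ k := by
    rcases k with _ | _ | k <;> omega
  have hA2 : 2 * a2 ≤ a1 := by
    have := Nat.mul_le_mul_left a2 hk2
    omega
  obtain ⟨s, hs⟩ := h.hA
  obtain ⟨t, ht⟩ := h.hB
  rcases s with _ | s'
  · omega
  rcases t with _ | _ | t'
  · omega
  · exact absurd (by omega : b 2 + 2 * a1 = b 1) hT
  have h1 : a1 * (2 * s' + 1) ≤ 4 * b 1 := by
    have f1 : a1 * (2 * s' + 1) + a1 = 2 * (a1 * (s' + 1)) := by ring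
    linarith [hs]
  have h2 : b 1 * (t' + 1) < 2 * a1 := by
    have f2 : b 1 * (t' + 1) + b 1 = b 1 * (t' + 2) := by ring
    linarith [ht]
  have hbound : (2 * s' + 1) * (t' + 1) ≤ 7 := by
    by_contra hge
    push_neg at hge
    have m1 : (a1 * (2 * s' + 1)) * (b 1 * (t' + 1) + 1) ≤ (4 * b 1) * (2 * a1) :=
      Nat.mul_le_mul h1 h2
    have key : (a1 * b 1) * 8 ≤ (a1 * b 1) * ((2 * s' + 1) * (t' + 1)) :=
      Nat.mul_le_mul_left _ hge
    nlinarith [m1, key, ha1, hb1, h1]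
  have hst : (s' = 0 ∧ t' ≤ 6) ∨ (s' = 1 ∧ t' ≤ 1) ∨ (s' = 2 ∧ t' = 0) ∨
      (s' = 3 ∧ t' = 0) := by
    have e1 : 2 * s' + 1 ≤ 7 := le_trans (Nat.le_mul_of_pos_right _ (by omega)) hbound
    have e2 : t' + 1 ≤ 7 := le_trans (Nat.le_mul_of_pos_left _ (by omega)) hbound
    have e1' : s' ≤ 3 := by omega
    have e2' : t' ≤ 6 := by omega
    interval_cases s' <;> interval_cases t' <;> omega
  rcases hst with ⟨rfl, ht6⟩ | ⟨rfl, ht1⟩ | ⟨rfl, rfl⟩ | ⟨rfl, rfl⟩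
  · -- s = 1
    have hs' : a2 + 2 * b 1 = a1 := by omega
    interval_cases t'
    · omega
    · omega
    · omega
    · -- t = 5
      rcases case_s1t5 h hn hs' (by omega) with h' | h' | h' | h'
      · exact Or.inr (Or.inr (Or.inr (Or.inl h')))
      · exact Or.inr (Or.inr (Or.inr (Or.inr (Or.inl h'))))
      · exact Or.inr (Or.inr (Or.inr (Or.inr (Or.inr (Or.inr (Or.inl h'))))))
      · exact Or.inr (Or.inr (Or.inr (Or.inr (Or.inr (Or.inr (Or.inr (Or.inr (Or.inl h'))))))))
    · -- t = 6
      exact Or.inr (Or.inr (Or.inr (Or.inr (Or.inr (Or.inr (Or.inr (Or.inr (Or.inr (Or.inr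
        (Or.inr (Or.inr (case_s1t6 h hn hs' (by omega)))))))))))))
    · exact (case_s1t78 h hn (Or.inl rfl) hs' (by omega : b 2 + 2 * a1 = b 1 * 7)).elim
    · exact (case_s1t78 h hn (Or.inr rfl) hs' (by omega : b 2 + 2 * a1 = b 1 * 8)).elim
  · -- s = 2
    interval_cases t'
    · omega
    · exact Or.inl (case_s2t3 h hn (by omega) (by omega))
  · -- s = 3, t = 2
    rcases case_s3t2 h hn (by omega) (by omega) with h' | h' | h' | h' | h' | h'
    · exact Or.inr (Or.inl h')
    · exact Or.inr (Or.inr (Or.inl h'))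
    · exact Or.inr (Or.inr (Or.inr (Or.inr (Or.inr (Or.inl h')))))
    · exact Or.inr (Or.inr (Or.inr (Or.inr (Or.inr (Or.inr (Or.inr (Or.inl h')))))))
    · exact Or.inr (Or.inr (Or.inr (Or.inr (Or.inr (Or.inr (Or.inr (Or.inr (Or.inr (Or.inr
        (Or.inl h'))))))))))
    · exact Or.inr (Or.inr (Or.inr (Or.inr (Or.inr (Or.inr (Or.inr (Or.inr (Or.inr (Or.inr
        (Or.inr (Or.inl h')))))))))))
  · -- s = 4, t = 2
    exact Or.inr (Or.inr (Or.inr (Or.inr (Or.inr (Or.inr (Or.inr (Or.inr (Or.inr (Or.inl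
      (case_s4t2 h hn (by omega) (by omega)))))))))))

lemma ne_fst {x1 x2 y1 y2 : ℕ} {f g : ℕ → ℕ} (h : x1 ≠ y1) : (x1, x2, f) ≠ (y1, y2, g) :=
  fun he => h (congrArg Prod.fst he)
lemma ne_snd {x1 x2 y1 y2 : ℕ} {f g : ℕ → ℕ} (h : x2 ≠ y2) : (x1, x2, f) ≠ (y1, y2, g) :=
  fun he => h (congrArg (fun p => p.2.1) he)
lemma ne_b {x1 x2 y1 y2 i : ℕ} {f g : ℕ → ℕ} (h : f i ≠ g i) : (x1, x2, f) ≠ (y1, y2, g) :=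
  fun he => h (congrFun (congrArg (fun p => p.2.2) he) i)

def E9 (n : ℕ) : Set (ℕ × ℕ × (ℕ → ℕ)) :=
  insert (2*n, 2, bf1 n) (insert (4*n-7, 1, bf2 n) (insert (4*n-5, 1, bf3 n)
   (insert (4*n-1, 1, bf1 n) (insert (4*n+1, 1, bf5 n) (insert (8*n-28, 2, bf6 n)
   (insert (8*n-16, 2, bfA n) (insert (8*n-16, 2, bf8 n) {(8*n-4, 2, bfB n)})))))))

def E10 (n : ℕ) : Set (ℕ × ℕ × (ℕ → ℕ)) := insert ((n+1)/2, 2, bf10 n) (E9 n)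

lemma E9_finite (n : ℕ) : (E9 n).Finite := by
  unfold E9
  exact ((((((((Set.finite_singleton _).insert _).insert _).insert _).insert _).insert
    _).insert _).insert _).insert _

lemma E10_finite (n : ℕ) : (E10 n).Finite := (E9_finite n).insert _

lemma E9_card {n : ℕ} (hn : 5 ≤ n) : (E9 n).ncard = 9 := by
  have eA1 : bfA n 1 = 4*(n-1) - 5 := bfA_in le_rfl (by omega)
  have e81 : bf8 n 1 = 12*n - 25 := bf8_1
  unfold E9
  rw [Set.ncard_insert_of_notMem ?m1 ((((((((Set.finite_singleton _).insert _).insert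
      _).insert _).insert _).insert _).insert _).insert _),
    Set.ncard_insert_of_notMem ?m2 (((((((Set.finite_singleton _).insert _).insert
      _).insert _).insert _).insert _).insert _),
    Set.ncard_insert_of_notMem ?m3 ((((((Set.finite_singleton _).insert _).insert
      _).insert _).insert _).insert _),
    Set.ncard_insert_of_notMem ?m4 (((((Set.finite_singleton _).insert _).insert
      _).insert _).insert _),
    Set.ncard_insert_of_notMem ?m5 ((((Set.finite_singleton _).insert _).insert
      _).insert _),
    Set.ncard_insert_of_notMem ?m6 (((Set.finite_singleton _).insert _).insert _),
    Set.ncard_insert_of_notMem ?m7 ((Set.finite_singleton _).insert _),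
    Set.ncard_insert_of_notMem ?m8 (Set.finite_singleton _),
    Set.ncard_singleton]
  case m1 =>
    simp only [Set.mem_insert_iff, Set.mem_singleton_iff]
    push_neg
    exact ⟨ne_fst (by omega), ne_fst (by omega), ne_fst (by omega), ne_fst (by omega),
      ne_fst (by omega), ne_fst (by omega), ne_fst (by omega), ne_fst (by omega)⟩
  case m2 =>
    simp only [Set.mem_insert_iff, Set.mem_singleton_iff]
    push_neg
    exact ⟨ne_fst (by omega), ne_fst (by omega), ne_fst (by omega), ne_fst (by omega),
      ne_fst (by omega), ne_fst (by omega), ne_fst (by omega)⟩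
  case m3 =>
    simp only [Set.mem_insert_iff, Set.mem_singleton_iff]
    push_neg
    exact ⟨ne_fst (by omega), ne_fst (by omega), ne_fst (by omega), ne_fst (by omega),
      ne_fst (by omega), ne_fst (by omega)⟩
  case m4 =>
    simp only [Set.mem_insert_iff, Set.mem_singleton_iff]
    push_neg
    exact ⟨ne_fst (by omega), ne_fst (by omega), ne_fst (by omega), ne_fst (by omega),
      ne_fst (by omega)⟩
  case m5 =>
    simp only [Set.mem_insert_iff, Set.mem_singleton_iff]
    push_neg
    exact ⟨ne_fst (by omega), ne_fst (by omega), ne_fst (by omega), ne_fst (by omega)⟩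
  case m6 =>
    simp only [Set.mem_insert_iff, Set.mem_singleton_iff]
    push_neg
    exact ⟨ne_fst (by omega), ne_fst (by omega), ne_fst (by omega)⟩
  case m7 =>
    simp only [Set.mem_insert_iff, Set.mem_singleton_iff]
    push_neg
    exact ⟨ne_b (i := 1) (by rw [eA1, e81]; omega), ne_fst (by omega)⟩
  case m8 =>
    simp only [Set.mem_singleton_iff]
    exact ne_fst (by omega)

lemma E10_card {n : ℕ} (hn : 5 ≤ n) : (E10 n).ncard = 10 := by
  unfold E10
  rw [Set.ncard_insert_of_notMem ?m0 (E9_finite n), E9_card hn]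
  case m0 =>
    unfold E9
    simp only [Set.mem_insert_iff, Set.mem_singleton_iff]
    push_neg
    exact ⟨ne_fst (by omega), ne_fst (by omega), ne_fst (by omega), ne_fst (by omega),
      ne_fst (by omega), ne_fst (by omega), ne_fst (by omega), ne_fst (by omega),
      ne_fst (by omega)⟩

/-! Each family element is a "new" structure (t ≥ 2). -/

lemma F1_in {n : ℕ} (hn : 2 ≤ n) : (2*n, 2, bf1 n) ∈ New n :=
  ⟨sm_F1 hn, by show bf1 n 2 + 2 * (2*n) ≠ bf1 n 1; rw [bf1_in (by omega) (by omega), bf1_in (by omega) (by omega)]; omega⟩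
lemma F2_in {n : ℕ} (hn : 3 ≤ n) : (4*n-7, 1, bf2 n) ∈ New n :=
  ⟨sm_F2 hn, by show bf2 n 2 + 2 * (4*n-7) ≠ bf2 n 1; rw [bf2_2, bf2_1]; omega⟩
lemma F3_in {n : ℕ} (hn : 3 ≤ n) : (4*n-5, 1, bf3 n) ∈ New n :=
  ⟨sm_F3 hn, by show bf3 n 2 + 2 * (4*n-5) ≠ bf3 n 1; rw [bf3_2, bf3_1]; omega⟩
lemma F4_in {n : ℕ} (hn : 2 ≤ n) : (4*n-1, 1, bf1 n) ∈ New n :=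
  ⟨sm_F4 hn, by show bf1 n 2 + 2 * (4*n-1) ≠ bf1 n 1; rw [bf1_in (by omega) (by omega), bf1_in (by omega) (by omega)]; omega⟩
lemma F5_in {n : ℕ} (hn : 2 ≤ n) : (4*n+1, 1, bf5 n) ∈ New n :=
  ⟨sm_F5 hn, by show bf5 n 2 + 2 * (4*n+1) ≠ bf5 n 1; rw [bf5_in (by omega) (by omega), bf5_in (by omega) (by omega)]; omega⟩
lemma F6_in {n : ℕ} (hn : 5 ≤ n) : (8*n-28, 2, bf6 n) ∈ New n :=
  ⟨sm_F6 hn, by show bf6 n 2 + 2 * (8*n-28) ≠ bf6 n 1; rw [bf6_2, bf6_1]; omega⟩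
lemma F7_in {n : ℕ} (hn : 4 ≤ n) : (8*n-16, 2, bfA n) ∈ New n :=
  ⟨sm_F7 hn, by show bfA n 2 + 2 * (8*n-16) ≠ bfA n 1; rw [bfA_in (by omega) (by omega), bfA_in (by omega) (by omega)]; omega⟩
lemma F8_in {n : ℕ} (hn : 3 ≤ n) : (8*n-16, 2, bf8 n) ∈ New n :=
  ⟨sm_F8 hn, by show bf8 n 2 + 2 * (8*n-16) ≠ bf8 n 1; rw [bf8_2, bf8_1]; omega⟩
lemma F9_in {n : ℕ} (hn : 2 ≤ n) : (8*n-4, 2, bfB n) ∈ New n :=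
  ⟨sm_F9 hn, by show bfB n 2 + 2 * (8*n-4) ≠ bfB n 1; rw [bfB_in (by omega) (by omega), bfB_in (by omega) (by omega)]; omega⟩
lemma F10_in {n : ℕ} (hn : 7 ≤ n) (h4 : n % 4 = 3) : ((n+1)/2, 2, bf10 n) ∈ New n :=
  ⟨sm_F10 hn h4, by show bf10 n 2 + 2 * ((n+1)/2) ≠ bf10 n 1; rw [bf10_in (by omega) (by omega), bf10_in (by omega) (by omega)]; omega⟩
lemma G2_in : (3, 1, gf 4 2 0) ∈ New 2 := ⟨sm_G2, by show 2 + 2 * 3 ≠ 4; omega⟩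
lemma G3a_in : (4, 2, gf 5 2 1) ∈ New 3 := ⟨sm_G3a, by show 2 + 2 * 4 ≠ 5; omega⟩
lemma G3b_in : (8, 2, gf 3 2 1) ∈ New 3 := ⟨sm_G3b, by show 2 + 2 * 8 ≠ 3; omega⟩

lemma new_sub {n : ℕ} (hn : 2 ≤ n) {x : ℕ × ℕ × (ℕ → ℕ)} (hx : x ∈ New n) :
    Concl n x.1 x.2.1 x.2.2 := by
  obtain ⟨x1, x2, xb⟩ := x
  exact new_classify hn hx.1 hx.2

lemma new_eq_E9 {n : ℕ} (hn : 5 ≤ n) (h4 : n % 4 ≠ 3) : New n = E9 n := by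
  ext x
  constructor
  · intro hx
    obtain ⟨x1, x2, xb⟩ := x
    have hc : Concl n x1 x2 xb := new_sub (by omega) hx
    unfold Concl at hc
    unfold E9
    simp only [Set.mem_insert_iff, Set.mem_singleton_iff]
    rcases hc with ⟨e1,e2,e3⟩ | ⟨h3,e1,e2,e3⟩ | ⟨h3,e1,e2,e3⟩ | ⟨e1,e2,e3⟩ | ⟨e1,e2,e3⟩ |
      ⟨h5,e1,e2,e3⟩ | ⟨h4',e1,e2,e3⟩ | ⟨h3,e1,e2,e3⟩ | ⟨e1,e2,e3⟩ | ⟨h7,h4',e1,e2,e3⟩ |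
      ⟨h2,_⟩ | ⟨h3,_⟩ | ⟨h3,_⟩
    · exact Or.inl (by rw [e1, e2, e3])
    · exact Or.inr (Or.inl (by rw [e1, e2, e3]))
    · exact Or.inr (Or.inr (Or.inl (by rw [e1, e2, e3])))
    · exact Or.inr (Or.inr (Or.inr (Or.inl (by rw [e1, e2, e3]))))
    · exact Or.inr (Or.inr (Or.inr (Or.inr (Or.inl (by rw [e1, e2, e3])))))
    · exact Or.inr (Or.inr (Or.inr (Or.inr (Or.inr (Or.inl (by rw [e1, e2, e3]))))))
    · exact Or.inr (Or.inr (Or.inr (Or.inr (Or.inr (Or.inr (Or.inl (by rw [e1, e2, e3])))))))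
    · exact Or.inr (Or.inr (Or.inr (Or.inr (Or.inr (Or.inr (Or.inr (Or.inl
        (by rw [e1, e2, e3]))))))))
    · exact Or.inr (Or.inr (Or.inr (Or.inr (Or.inr (Or.inr (Or.inr (Or.inr
        (by rw [e1, e2, e3]))))))))
    · omega
    · omega
    · omega
    · omega
  · intro hx
    unfold E9 at hx
    simp only [Set.mem_insert_iff, Set.mem_singleton_iff] at hx
    rcases hx with e | e | e | e | e | e | e | e | e
    all_goals subst e
    · exact F1_in (by omega)
    · exact F2_in (by omega)
    · exact F3_in (by omega)
    · exact F4_in (by omega)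
    · exact F5_in (by omega)
    · exact F6_in (by omega)
    · exact F7_in (by omega)
    · exact F8_in (by omega)
    · exact F9_in (by omega)

lemma new_eq_E10 {n : ℕ} (hn : 5 ≤ n) (h4 : n % 4 = 3) : New n = E10 n := by
  ext x
  constructor
  · intro hx
    obtain ⟨x1, x2, xb⟩ := x
    have hc : Concl n x1 x2 xb := new_sub (by omega) hx
    unfold Concl at hc
    unfold E10 E9
    simp only [Set.mem_insert_iff, Set.mem_singleton_iff]
    rcases hc with ⟨e1,e2,e3⟩ | ⟨h3,e1,e2,e3⟩ | ⟨h3,e1,e2,e3⟩ | ⟨e1,e2,e3⟩ | ⟨e1,e2,e3⟩ |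
      ⟨h5,e1,e2,e3⟩ | ⟨h4',e1,e2,e3⟩ | ⟨h3,e1,e2,e3⟩ | ⟨e1,e2,e3⟩ | ⟨h7,h4',e1,e2,e3⟩ |
      ⟨h2,_⟩ | ⟨h3,_⟩ | ⟨h3,_⟩
    · exact Or.inr (Or.inl (by rw [e1, e2, e3]))
    · exact Or.inr (Or.inr (Or.inl (by rw [e1, e2, e3])))
    · exact Or.inr (Or.inr (Or.inr (Or.inl (by rw [e1, e2, e3]))))
    · exact Or.inr (Or.inr (Or.inr (Or.inr (Or.inl (by rw [e1, e2, e3])))))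
    · exact Or.inr (Or.inr (Or.inr (Or.inr (Or.inr (Or.inl (by rw [e1, e2, e3]))))))
    · exact Or.inr (Or.inr (Or.inr (Or.inr (Or.inr (Or.inr (Or.inl (by rw [e1, e2, e3])))))))
    · exact Or.inr (Or.inr (Or.inr (Or.inr (Or.inr (Or.inr (Or.inr (Or.inl
        (by rw [e1, e2, e3]))))))))
    · exact Or.inr (Or.inr (Or.inr (Or.inr (Or.inr (Or.inr (Or.inr (Or.inr (Or.inl
        (by rw [e1, e2, e3])))))))))
    · exact Or.inr (Or.inr (Or.inr (Or.inr (Or.inr (Or.inr (Or.inr (Or.inr (Or.inr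
        (by rw [e1, e2, e3])))))))))
    · exact Or.inl (by rw [e1, e2, e3])
    · omega
    · omega
    · omega
  · intro hx
    unfold E10 E9 at hx
    simp only [Set.mem_insert_iff, Set.mem_singleton_iff] at hx
    rcases hx with e | e | e | e | e | e | e | e | e | e
    all_goals subst e
    · exact F10_in (by omega) h4
    · exact F1_in (by omega)
    · exact F2_in (by omega)
    · exact F3_in (by omega)
    · exact F4_in (by omega)
    · exact F5_in (by omega)
    · exact F6_in (by omega)
    · exact F7_in (by omega)
    · exact F8_in (by omega)
    · exact F9_in (by omega)

def E4 : Set (ℕ × ℕ × (ℕ → ℕ)) :=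
  {(2*4, 2, bf1 4), (4*4-7, 1, bf2 4), (4*4-5, 1, bf3 4), (4*4-1, 1, bf1 4),
   (4*4+1, 1, bf5 4), (8*4-16, 2, bfA 4), (8*4-16, 2, bf8 4), (8*4-4, 2, bfB 4)}
def E3 : Set (ℕ × ℕ × (ℕ → ℕ)) :=
  {(2*3, 2, bf1 3), (4*3-7, 1, bf2 3), (4*3-5, 1, bf3 3), (4*3-1, 1, bf1 3),
   (4*3+1, 1, bf5 3), (8*3-16, 2, bf8 3), (8*3-4, 2, bfB 3), (4, 2, gf 5 2 1),
   (8, 2, gf 3 2 1)}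
def E2 : Set (ℕ × ℕ × (ℕ → ℕ)) :=
  {(2*2, 2, bf1 2), (4*2-1, 1, bf1 2), (4*2+1, 1, bf5 2), (8*2-4, 2, bfB 2),
   (3, 1, gf 4 2 0)}

lemma new_eq_E4 : New 4 = E4 := by
  ext x
  constructor
  · intro hx
    obtain ⟨x1, x2, xb⟩ := x
    have hc : Concl 4 x1 x2 xb := new_sub (by omega) hx
    unfold Concl at hc
    unfold E4
    simp only [Set.mem_insert_iff, Set.mem_singleton_iff]
    rcases hc with ⟨e1,e2,e3⟩ | ⟨h3,e1,e2,e3⟩ | ⟨h3,e1,e2,e3⟩ | ⟨e1,e2,e3⟩ | ⟨e1,e2,e3⟩ |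
      ⟨h5,e1,e2,e3⟩ | ⟨h4',e1,e2,e3⟩ | ⟨h3,e1,e2,e3⟩ | ⟨e1,e2,e3⟩ | ⟨h7,h4',e1,e2,e3⟩ |
      ⟨h2,_⟩ | ⟨h3,_⟩ | ⟨h3,_⟩
    · exact Or.inl (by rw [e1, e2, e3])
    · exact Or.inr (Or.inl (by rw [e1, e2, e3]))
    · exact Or.inr (Or.inr (Or.inl (by rw [e1, e2, e3])))
    · exact Or.inr (Or.inr (Or.inr (Or.inl (by rw [e1, e2, e3]))))
    · exact Or.inr (Or.inr (Or.inr (Or.inr (Or.inl (by rw [e1, e2, e3])))))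
    · omega
    · exact Or.inr (Or.inr (Or.inr (Or.inr (Or.inr (Or.inl (by rw [e1, e2, e3]))))))
    · exact Or.inr (Or.inr (Or.inr (Or.inr (Or.inr (Or.inr (Or.inl (by rw [e1, e2, e3])))))))
    · exact Or.inr (Or.inr (Or.inr (Or.inr (Or.inr (Or.inr (Or.inr (by rw [e1, e2, e3])))))))
    · omega
    · omega
    · omega
    · omega
  · intro hx
    unfold E4 at hx
    simp only [Set.mem_insert_iff, Set.mem_singleton_iff] at hx
    rcases hx with e | e | e | e | e | e | e | e
    all_goals subst e
    · exact F1_in (by omega)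
    · exact F2_in (by omega)
    · exact F3_in (by omega)
    · exact F4_in (by omega)
    · exact F5_in (by omega)
    · exact F7_in (by omega)
    · exact F8_in (by omega)
    · exact F9_in (by omega)

lemma new_eq_E3 : New 3 = E3 := by
  ext x
  constructor
  · intro hx
    obtain ⟨x1, x2, xb⟩ := x
    have hc : Concl 3 x1 x2 xb := new_sub (by omega) hx
    unfold Concl at hc
    unfold E3
    simp only [Set.mem_insert_iff, Set.mem_singleton_iff]
    rcases hc with ⟨e1,e2,e3⟩ | ⟨h3,e1,e2,e3⟩ | ⟨h3,e1,e2,e3⟩ | ⟨e1,e2,e3⟩ | ⟨e1,e2,e3⟩ |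
      ⟨h5,e1,e2,e3⟩ | ⟨h4',e1,e2,e3⟩ | ⟨h3,e1,e2,e3⟩ | ⟨e1,e2,e3⟩ | ⟨h7,h4',e1,e2,e3⟩ |
      ⟨h2,_⟩ | ⟨h3,e1,e2,e3⟩ | ⟨h3,e1,e2,e3⟩
    · exact Or.inl (by rw [e1, e2, e3])
    · exact Or.inr (Or.inl (by rw [e1, e2, e3]))
    · exact Or.inr (Or.inr (Or.inl (by rw [e1, e2, e3])))
    · exact Or.inr (Or.inr (Or.inr (Or.inl (by rw [e1, e2, e3]))))
    · exact Or.inr (Or.inr (Or.inr (Or.inr (Or.inl (by rw [e1, e2, e3])))))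
    · omega
    · omega
    · exact Or.inr (Or.inr (Or.inr (Or.inr (Or.inr (Or.inl (by rw [e1, e2, e3]))))))
    · exact Or.inr (Or.inr (Or.inr (Or.inr (Or.inr (Or.inr (Or.inl (by rw [e1, e2, e3])))))))
    · omega
    · omega
    · exact Or.inr (Or.inr (Or.inr (Or.inr (Or.inr (Or.inr (Or.inr (Or.inl
        (by rw [e1, e2, e3]))))))))
    · exact Or.inr (Or.inr (Or.inr (Or.inr (Or.inr (Or.inr (Or.inr (Or.inr
        (by rw [e1, e2, e3]))))))))
  · intro hx
    unfold E3 at hx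
    simp only [Set.mem_insert_iff, Set.mem_singleton_iff] at hx
    rcases hx with e | e | e | e | e | e | e | e | e
    all_goals subst e
    · exact F1_in (by omega)
    · exact F2_in (by omega)
    · exact F3_in (by omega)
    · exact F4_in (by omega)
    · exact F5_in (by omega)
    · exact F8_in (by omega)
    · exact F9_in (by omega)
    · exact G3a_in
    · exact G3b_in

lemma new_eq_E2 : New 2 = E2 := by
  ext x
  constructor
  · intro hx
    obtain ⟨x1, x2, xb⟩ := x
    have hc : Concl 2 x1 x2 xb := new_sub (by omega) hx
    unfold Concl at hc
    unfold E2
    simp only [Set.mem_insert_iff, Set.mem_singleton_iff]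
    rcases hc with ⟨e1,e2,e3⟩ | ⟨h3,e1,e2,e3⟩ | ⟨h3,e1,e2,e3⟩ | ⟨e1,e2,e3⟩ | ⟨e1,e2,e3⟩ |
      ⟨h5,e1,e2,e3⟩ | ⟨h4',e1,e2,e3⟩ | ⟨h3,e1,e2,e3⟩ | ⟨e1,e2,e3⟩ | ⟨h7,h4',e1,e2,e3⟩ |
      ⟨h2,e1,e2,e3⟩ | ⟨h3,e1,e2,e3⟩ | ⟨h3,e1,e2,e3⟩
    · exact Or.inl (by rw [e1, e2, e3])
    · omega
    · omega
    · exact Or.inr (Or.inl (by rw [e1, e2, e3]))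
    · exact Or.inr (Or.inr (Or.inl (by rw [e1, e2, e3])))
    · omega
    · omega
    · omega
    · exact Or.inr (Or.inr (Or.inr (Or.inl (by rw [e1, e2, e3]))))
    · omega
    · exact Or.inr (Or.inr (Or.inr (Or.inr (by rw [e1, e2, e3]))))
    · omega
    · omega
  · intro hx
    unfold E2 at hx
    simp only [Set.mem_insert_iff, Set.mem_singleton_iff] at hx
    rcases hx with e | e | e | e | e
    all_goals subst e
    · exact F1_in (by omega)
    · exact F4_in (by omega)
    · exact F5_in (by omega)
    · exact F9_in (by omega)
    · exact G2_in

lemma E4_card : E4.ncard = 8 := by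
  have eA1 : bfA 4 1 = 4*(4-1) - 5 := bfA_in le_rfl (by omega)
  have e81 : bf8 4 1 = 12*4 - 25 := bf8_1
  unfold E4
  rw [Set.ncard_insert_of_notMem ?m1 (((((((Set.finite_singleton _).insert _).insert
      _).insert _).insert _).insert _).insert _),
    Set.ncard_insert_of_notMem ?m2 ((((((Set.finite_singleton _).insert _).insert
      _).insert _).insert _).insert _),
    Set.ncard_insert_of_notMem ?m3 (((((Set.finite_singleton _).insert _).insert
      _).insert _).insert _),
    Set.ncard_insert_of_notMem ?m4 ((((Set.finite_singleton _).insert _).insert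
      _).insert _),
    Set.ncard_insert_of_notMem ?m5 (((Set.finite_singleton _).insert _).insert _),
    Set.ncard_insert_of_notMem ?m6 ((Set.finite_singleton _).insert _),
    Set.ncard_insert_of_notMem ?m7 (Set.finite_singleton _),
    Set.ncard_singleton]
  case m1 =>
    simp only [Set.mem_insert_iff, Set.mem_singleton_iff]; push_neg
    exact ⟨ne_fst (by omega), ne_fst (by omega), ne_fst (by omega), ne_fst (by omega),
      ne_fst (by omega), ne_fst (by omega), ne_fst (by omega)⟩
  case m2 =>
    simp only [Set.mem_insert_iff, Set.mem_singleton_iff]; push_neg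
    exact ⟨ne_fst (by omega), ne_fst (by omega), ne_fst (by omega), ne_fst (by omega),
      ne_fst (by omega), ne_fst (by omega)⟩
  case m3 =>
    simp only [Set.mem_insert_iff, Set.mem_singleton_iff]; push_neg
    exact ⟨ne_fst (by omega), ne_fst (by omega), ne_fst (by omega), ne_fst (by omega),
      ne_fst (by omega)⟩
  case m4 =>
    simp only [Set.mem_insert_iff, Set.mem_singleton_iff]; push_neg
    exact ⟨ne_fst (by omega), ne_fst (by omega), ne_fst (by omega), ne_fst (by omega)⟩
  case m5 =>
    simp only [Set.mem_insert_iff, Set.mem_singleton_iff]; push_neg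
    exact ⟨ne_fst (by omega), ne_fst (by omega), ne_fst (by omega)⟩
  case m6 =>
    simp only [Set.mem_insert_iff, Set.mem_singleton_iff]; push_neg
    exact ⟨ne_b (i := 1) (by rw [eA1, e81]; omega), ne_fst (by omega)⟩
  case m7 =>
    simp only [Set.mem_singleton_iff]
    exact ne_fst (by omega)

lemma E3_card : E3.ncard = 9 := by
  have e81 : bf8 3 1 = 12*3 - 25 := bf8_1
  have eg1 : gf 3 2 1 1 = 3 := rfl
  unfold E3
  rw [Set.ncard_insert_of_notMem ?m1 ((((((((Set.finite_singleton _).insert _).insert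
      _).insert _).insert _).insert _).insert _).insert _),
    Set.ncard_insert_of_notMem ?m2 (((((((Set.finite_singleton _).insert _).insert
      _).insert _).insert _).insert _).insert _),
    Set.ncard_insert_of_notMem ?m3 ((((((Set.finite_singleton _).insert _).insert
      _).insert _).insert _).insert _),
    Set.ncard_insert_of_notMem ?m4 (((((Set.finite_singleton _).insert _).insert
      _).insert _).insert _),
    Set.ncard_insert_of_notMem ?m5 ((((Set.finite_singleton _).insert _).insert
      _).insert _),
    Set.ncard_insert_of_notMem ?m6 (((Set.finite_singleton _).insert _).insert _),
    Set.ncard_insert_of_notMem ?m7 ((Set.finite_singleton _).insert _),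
    Set.ncard_insert_of_notMem ?m8 (Set.finite_singleton _),
    Set.ncard_singleton]
  case m1 =>
    simp only [Set.mem_insert_iff, Set.mem_singleton_iff]; push_neg
    exact ⟨ne_fst (by omega), ne_fst (by omega), ne_fst (by omega), ne_fst (by omega),
      ne_fst (by omega), ne_fst (by omega), ne_fst (by omega), ne_fst (by omega)⟩
  case m2 =>
    simp only [Set.mem_insert_iff, Set.mem_singleton_iff]; push_neg
    exact ⟨ne_fst (by omega), ne_fst (by omega), ne_fst (by omega), ne_fst (by omega),
      ne_fst (by omega), ne_fst (by omega), ne_fst (by omega)⟩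
  case m3 =>
    simp only [Set.mem_insert_iff, Set.mem_singleton_iff]; push_neg
    exact ⟨ne_fst (by omega), ne_fst (by omega), ne_fst (by omega), ne_fst (by omega),
      ne_fst (by omega), ne_fst (by omega)⟩
  case m4 =>
    simp only [Set.mem_insert_iff, Set.mem_singleton_iff]; push_neg
    exact ⟨ne_fst (by omega), ne_fst (by omega), ne_fst (by omega), ne_fst (by omega),
      ne_fst (by omega)⟩
  case m5 =>
    simp only [Set.mem_insert_iff, Set.mem_singleton_iff]; push_neg
    exact ⟨ne_fst (by omega), ne_fst (by omega), ne_fst (by omega), ne_fst (by omega)⟩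
  case m6 =>
    simp only [Set.mem_insert_iff, Set.mem_singleton_iff]; push_neg
    exact ⟨ne_fst (by omega), ne_fst (by omega), ne_b (i := 1) (by rw [e81, eg1]; omega)⟩
  case m7 =>
    simp only [Set.mem_insert_iff, Set.mem_singleton_iff]; push_neg
    exact ⟨ne_fst (by omega), ne_fst (by omega)⟩
  case m8 =>
    simp only [Set.mem_singleton_iff]
    exact ne_fst (by omega)

lemma E2_card : E2.ncard = 5 := by
  unfold E2
  rw [Set.ncard_insert_of_notMem ?m1 ((((Set.finite_singleton _).insert _).insert
      _).insert _),
    Set.ncard_insert_of_notMem ?m2 (((Set.finite_singleton _).insert _).insert _),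
    Set.ncard_insert_of_notMem ?m3 ((Set.finite_singleton _).insert _),
    Set.ncard_insert_of_notMem ?m4 (Set.finite_singleton _),
    Set.ncard_singleton]
  case m1 =>
    simp only [Set.mem_insert_iff, Set.mem_singleton_iff]; push_neg
    exact ⟨ne_fst (by omega), ne_fst (by omega), ne_fst (by omega), ne_fst (by omega)⟩
  case m2 =>
    simp only [Set.mem_insert_iff, Set.mem_singleton_iff]; push_neg
    exact ⟨ne_fst (by omega), ne_fst (by omega), ne_fst (by omega)⟩
  case m3 =>
    simp only [Set.mem_insert_iff, Set.mem_singleton_iff]; push_neg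
    exact ⟨ne_fst (by omega), ne_fst (by omega)⟩
  case m4 =>
    simp only [Set.mem_singleton_iff]
    exact ne_fst (by omega)

lemma E4_finite : E4.Finite :=
  (((((((Set.finite_singleton _).insert _).insert _).insert _).insert _).insert
    _).insert _).insert _
lemma E3_finite : E3.Finite :=
  ((((((((Set.finite_singleton _).insert _).insert _).insert _).insert _).insert
    _).insert _).insert _).insert _
lemma E2_finite : E2.Finite :=
  ((((Set.finite_singleton _).insert _).insert _).insert _).insert _

def E1 : Set (ℕ × ℕ × (ℕ → ℕ)) := {(3, 1, gf 1 0 0), (4, 2, gf 1 0 0), (5, 1, gf 2 0 0)}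

lemma gf_one {c i : ℕ} (h : i ≠ 1) : gf c 0 0 i = 0 := by
  simp only [gf]
  rw [if_neg h]
  rcases show i = 2 ∨ i ≠ 2 by omega with h2 | h2
  · rw [if_pos h2]
  · rw [if_neg h2]
    rcases show i = 3 ∨ i ≠ 3 by omega with h3 | h3
    · rw [if_pos h3]
    · rw [if_neg h3]

lemma sm_T1 {a1 a2 c : ℕ} (hc : 0 < c) (ha2 : 0 < a2) (hlt : a2 < a1) (hdvd : a2 ∣ a1)
    (hA : a1 ∣ a2 + 2 * c) (hB : c ∣ 2 * a1) (hg : Nat.gcd a2 c = 1) :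
    Sm 1 a1 a2 (gf c 0 0) := by
  refine ⟨ha2, hlt, hdvd, ?_, ?_, ?_, ?_, ?_, ?_, ?_, ?_⟩
  · show a1 ∣ a2 + 2 * c
    exact hA
  · intro i h1 h2
    rw [show i = 1 by omega]
    exact hc
  · intro i hi
    exact gf_one (by omega)
  · intro i h1 h2
    omega
  · show gf c 0 0 1 ∣ gf c 0 0 2 + 2 * a1
    rw [show gf c 0 0 1 = c from rfl, show gf c 0 0 2 = 0 from rfl, zero_add]
    exact hB
  · intro i h1 h2
    omega
  · intro h
    omega
  · intro d hd1 hd2 h3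
    have hdc := h3 1 le_rfl le_rfl
    rw [show gf c 0 0 1 = c from rfl] at hdc
    have := Nat.dvd_gcd hd2 hdc
    rw [hg] at this
    exact Nat.dvd_one.mp this

lemma T1_eq : T 1 = E1 := by
  ext x
  constructor
  · intro hx
    obtain ⟨x1, x2, xb⟩ := x
    have h : Sm 1 x1 x2 xb := hx
    have hb1 := h.bpos 1 le_rfl le_rfl
    have hb2z : xb 2 = 0 := h.bzero 2 (by omega)
    have ha2 := h.ha2
    have hlt := h.hlt
    have ha1 : 0 < x1 := lt_trans ha2 hlt
    have hd1 : Nat.gcd x2 (xb 1) = 1 := by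
      refine h.hgcd _ ((Nat.gcd_dvd_left _ _).trans h.hdvd) (Nat.gcd_dvd_left _ _) ?_
      intro i h1 h2
      rw [show i = 1 by omega]
      exact Nat.gcd_dvd_right _ _
    obtain ⟨s, hs⟩ := h.hA
    have hB' := h.hB
    rw [hb2z, zero_add] at hB'
    obtain ⟨u, hu⟩ := hB'
    have ha2d : x2 ∣ 2 * xb 1 := by
      have h1 : x2 ∣ x1 * s := h.hdvd.mul_right s
      rw [← hs] at h1
      exact (Nat.dvd_add_right (dvd_refl x2)).mp h1
    have hx2' : x2 ∣ 2 := (Nat.Coprime.dvd_of_dvd_mul_right hd1 ha2d)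
    have hx2le : x2 ≤ 2 := Nat.le_of_dvd (by norm_num) hx2'
    have hx2 : x2 = 1 ∨ x2 = 2 := by omega
    obtain ⟨k, hk⟩ := h.hdvd
    have hk2 : 2 ≤ k := by
      rcases k with _ | _ | k <;> omega
    have hA2 : 2 * x2 ≤ x1 := by
      have := Nat.mul_le_mul_left x2 hk2
      omega
    rcases s with _ | s'
    · omega
    have h1 : x1 * (2 * s' + 1) ≤ 4 * xb 1 := by
      have f1 : x1 * (2 * s' + 1) + x1 = 2 * (x1 * (s' + 1)) := by ring
      linarith [hs]
    have hu1 : 1 ≤ u := by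
      rcases u with _ | u
      · omega
      · omega
    have hb1le : xb 1 ≤ 2 * x1 := by
      have h2 : xb 1 * 1 ≤ xb 1 * u := Nat.mul_le_mul_left _ hu1
      linarith [h2, hu]
    have hs'le : s' ≤ 3 := by
      have hh : x1 * (2 * s' + 1) ≤ x1 * 8 := by linarith
      have := Nat.le_of_mul_le_mul_left hh ha1
      omega
    have hule : u ≤ 8 := by
      have m1 : (x1 * (2 * s' + 1)) * u ≤ (4 * xb 1) * u := Nat.mul_le_mul_right u h1
      have e : (4 * xb 1) * u = x1 * 8 := by
        rw [mul_assoc, ← hu]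
        ring
      rw [e] at m1
      have m2 : x1 * u ≤ x1 * (2 * s' + 1) * u := by
        have : x1 * 1 ≤ x1 * (2 * s' + 1) := Nat.mul_le_mul_left _ (by omega)
        calc x1 * u = (x1 * 1) * u := by ring
          _ ≤ (x1 * (2 * s' + 1)) * u := Nat.mul_le_mul_right u this
      have m3 : x1 * u ≤ x1 * 8 := le_trans m2 m1
      have := Nat.le_of_mul_le_mul_left m3 ha1
      omega
    have hpar : x2 = 2 → xb 1 % 2 = 1 := by
      intro h2
      by_contra ho
      have h2d : (2:ℕ) ∣ Nat.gcd x2 (xb 1) :=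
        Nat.dvd_gcd ⟨1, by omega⟩ ⟨xb 1 / 2, by omega⟩
      rw [hd1] at h2d
      omega
    have hsol : (x1 = 3 ∧ x2 = 1 ∧ xb 1 = 1) ∨ (x1 = 4 ∧ x2 = 2 ∧ xb 1 = 1) ∨
        (x1 = 5 ∧ x2 = 1 ∧ xb 1 = 2) := by
      rcases hx2 with h2 | h2
      · interval_cases s' <;> interval_cases u <;> omega
      · have hodd := hpar h2
        interval_cases s' <;> interval_cases u <;> omega
    have hfun : ∀ c : ℕ, xb 1 = c → xb = gf c 0 0 := by
      intro c hcv
      funext i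
      rcases show i = 1 ∨ i ≠ 1 by omega with hi | hi
      · subst hi
        rw [show gf c 0 0 1 = c from rfl]
        exact hcv
      · rw [gf_one hi]
        exact h.bzero i (by omega)
    unfold E1
    simp only [Set.mem_insert_iff, Set.mem_singleton_iff]
    rcases hsol with ⟨e1, e2, e3⟩ | ⟨e1, e2, e3⟩ | ⟨e1, e2, e3⟩
    · exact Or.inl (by rw [e1, e2, hfun 1 e3])
    · exact Or.inr (Or.inl (by rw [e1, e2, hfun 1 e3]))
    · exact Or.inr (Or.inr (by rw [e1, e2, hfun 2 e3]))
  · intro hx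
    unfold E1 at hx
    simp only [Set.mem_insert_iff, Set.mem_singleton_iff] at hx
    rcases hx with e | e | e
    all_goals subst e
    · exact sm_T1 (a1 := 3) (a2 := 1) (c := 1) (by omega) (by omega) (by omega)
        (one_dvd _) ⟨1, by norm_num⟩ ⟨6, by norm_num⟩ (by norm_num)
    · exact sm_T1 (a1 := 4) (a2 := 2) (c := 1) (by omega) (by omega) (by omega)
        ⟨2, rfl⟩ ⟨1, by norm_num⟩ ⟨8, by norm_num⟩ (by norm_num)
    · exact sm_T1 (a1 := 5) (a2 := 1) (c := 2) (by omega) (by omega) (by omega)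
        (one_dvd _) ⟨1, by norm_num⟩ ⟨5, by norm_num⟩ (by norm_num)

lemma E1_card : E1.ncard = 3 := by
  unfold E1
  rw [Set.ncard_insert_of_notMem ?m1 ((Set.finite_singleton _).insert _),
    Set.ncard_insert_of_notMem ?m2 (Set.finite_singleton _),
    Set.ncard_singleton]
  case m1 =>
    simp only [Set.mem_insert_iff, Set.mem_singleton_iff]; push_neg
    exact ⟨ne_fst (by omega), ne_fst (by omega)⟩
  case m2 =>
    simp only [Set.mem_singleton_iff]
    exact ne_fst (by omega)

lemma E1_finite : E1.Finite := ((Set.finite_singleton _).insert _).insert _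

lemma new_summary (n : ℕ) (hn : 2 ≤ n) : (New n).Finite ∧ (New n).ncard =
    (if n = 2 then 5 else if n = 3 then 9 else if n = 4 then 8 else
     if n % 4 = 3 then 10 else 9) := by
  rcases show n = 2 ∨ n = 3 ∨ n = 4 ∨ 5 ≤ n by omega with h | h | h | h
  · subst h
    rw [new_eq_E2]
    exact ⟨E2_finite, by rw [E2_card]; norm_num⟩
  · subst h
    rw [new_eq_E3]
    exact ⟨E3_finite, by rw [E3_card]; norm_num⟩
  · subst h
    rw [new_eq_E4]
    exact ⟨E4_finite, by rw [E4_card]; norm_num⟩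
  · by_cases h4 : n % 4 = 3
    · rw [new_eq_E10 h h4]
      refine ⟨E10_finite n, ?_⟩
      rw [E10_card h]
      rw [if_neg (by omega), if_neg (by omega), if_neg (by omega), if_pos h4]
    · rw [new_eq_E9 h h4]
      refine ⟨E9_finite n, ?_⟩
      rw [E9_card h]
      rw [if_neg (by omega), if_neg (by omega), if_neg (by omega), if_neg h4]

lemma T_summary : ∀ n, 1 ≤ n → (T n).Finite ∧ (T n).ncard =
    (if n = 1 then 3 else if n = 2 then 8 else if n = 3 then 17
     else 9 * n - 11 + (n - 3) / 4) := by
  intro n hn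
  induction n, hn using Nat.le_induction with
  | base =>
    rw [T1_eq]
    exact ⟨E1_finite, by rw [E1_card]; norm_num⟩
  | succ n hn ih =>
    obtain ⟨hfin, hcard⟩ := ih
    obtain ⟨hf2, hc2⟩ := new_summary (n + 1) (by omega)
    obtain ⟨hfin', heq⟩ := card_T_succ n hn hfin hf2
    refine ⟨hfin', ?_⟩
    rw [heq, hcard, hc2]
    split_ifs <;> omega

end CPAux

/-- For every integer `n ≥ 4` there are exactly `9n - 11 + ⌊(n-3)/4⌋` smooth
arithmetical structures on `CP_{2,n}`; moreover, there are `17` on `CP_{2,3}`,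
eight on `CP_{2,2}`, and three on `CP_{2,1}`. -/
theorem smoothCount_two_n (n : ℕ) :
    (4 ≤ n → smoothCountCP 2 n = 9 * n - 11 + (n - 3) / 4) ∧
    smoothCountCP 2 3 = 17 ∧ smoothCountCP 2 2 = 8 ∧ smoothCountCP 2 1 = 3 := by
  refine ⟨?_, ?_, ?_, ?_⟩
  · intro h4
    rw [CPAux.count_eq n, (CPAux.T_summary n (by omega)).2,
      if_neg (by omega), if_neg (by omega), if_neg (by omega)]
  · rw [CPAux.count_eq 3, (CPAux.T_summary 3 (by omega)).2,
      if_neg (by norm_num), if_neg (by norm_num), if_pos rfl]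
  · rw [CPAux.count_eq 2, (CPAux.T_summary 2 (by omega)).2,
      if_neg (by norm_num), if_pos rfl]
  · rw [CPAux.count_eq 1, (CPAux.T_summary 1 (by omega)).2, if_pos rfl]
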